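/- arXiv:1711.08050 — 6 statements merged into one kernel-verified Lean document; each statement's English description precedes it below -/
import Mathlib

section
/- Let m ≥ 1. The function F : ℂ^m → ℝ defined by F(a_0,…,a_{m−1}) = max{Re λ : λ is a root of the polynomial λ^m − a_{m−1}λ^{m−1} − ⋯ − a_1λ − a_0} is continuous on ℂ^m. -/
/-!
The map sending a tuple of roots `r : Fin m → ℂ` to the coefficient vector of `∏ i, (X - r i)`
is continuous (Vieta), surjective (`ℂ` is algebraically closed) and proper (Cauchy's bound
bounds the roots by the coefficients), hence a quotient map. Composed with it, the function of
the theorem becomes `r ↦ max_i Re (r i)`, which is plainly continuous.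
-/

open Polynomial Finset

theorem Multiset.exists_map_univ_eq_of_card_eq {α : Type*} (s : Multiset α) {m : ℕ}
    (h : Multiset.card s = m) : ∃ r : Fin m → α, univ.val.map r = s := by
  obtain ⟨l, rfl⟩ := Quot.exists_rep s
  obtain rfl : l.length = m := h
  exact ⟨l.get, by simp⟩

theorem IsAlgClosed.exists_prod_X_sub_C_eq {K : Type*} [Field K] [IsAlgClosed K] {p : K[X]}
    (hp : p.Monic) {m : ℕ} (hdeg : p.natDegree = m) :
    ∃ r : Fin m → K, ∏ i, (X - C (r i)) = p := by
  obtain ⟨r, hr⟩ := p.roots.exists_map_univ_eq_of_card_eq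
    (IsAlgClosed.card_roots_eq_natDegree.trans hdeg)
  refine ⟨r, ?_⟩
  rw [← prod_multiset_X_sub_C_of_monic_of_roots_card_eq hp IsAlgClosed.card_roots_eq_natDegree,
    ← hr, Multiset.map_map]
  rfl

theorem continuous_coeff_prod_X_sub_C {R ι : Type*} [CommRing R] [TopologicalSpace R]
    [IsTopologicalRing R] [Fintype ι] (k : ℕ) :
    Continuous fun r : ι → R => (∏ i, (X - C (r i))).coeff k := by
  rcases le_or_gt k (Fintype.card ι) with hk | hk
  · have vieta : ∀ r : ι → R, (∏ i, (X - C (r i))).coeff k =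
        ∑ t ∈ univ.powersetCard (Fintype.card ι - k), ∏ i ∈ t, -r i := by
      intro r
      simp_rw [sub_eq_add_neg, ← C_neg]
      exact Finset.prod_X_add_C_coeff _ _ hk
    simp_rw [vieta]
    fun_prop
  · nontriviality R
    have vanish : ∀ r : ι → R, (∏ i, (X - C (r i))).coeff k = 0 := fun r =>
      coeff_eq_zero_of_natDegree_lt (by simpa using hk)
    simp_rw [vanish]
    exact continuous_const

theorem Continuous.ciSup_fintype {X ι α : Type*} [TopologicalSpace X]
    [ConditionallyCompleteLinearOrder α] [TopologicalSpace α] [OrderClosedTopology α] [Fintype ι]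
    {f : ι → X → α} (hf : ∀ i, Continuous (f i)) : Continuous fun x => ⨆ i, f i x := by
  cases isEmpty_or_nonempty ι
  · simp only [iSup, Set.range_eq_empty]
    exact continuous_const
  · simp only [← sup'_univ_eq_ciSup]
    exact Continuous.finset_sup'_apply univ_nonempty fun i _ => hf i

section monicOfCoeffs

variable {R : Type*} [CommRing R] {m : ℕ}

noncomputable def monicOfCoeffs (M : Fin m → R) : R[X] :=
  X ^ m - ∑ j : Fin m, C (M j) * X ^ (j : ℕ)

theorem eval_monicOfCoeffs (M : Fin m → R) (x : R) :
    (monicOfCoeffs M).eval x = x ^ m - ∑ j : Fin m, M j * x ^ (j : ℕ) := by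
  simp [monicOfCoeffs, eval_finsetSum]

theorem isRoot_monicOfCoeffs_iff (M : Fin m → R) (x : R) :
    (monicOfCoeffs M).IsRoot x ↔ x ^ m = ∑ j : Fin m, M j * x ^ (j : ℕ) := by
  rw [IsRoot.def, eval_monicOfCoeffs, sub_eq_zero]

theorem monicOfCoeffs_monic (M : Fin m → R) : (monicOfCoeffs M).Monic :=
  monic_X_pow_sub (degree_sum_fin_lt M)

theorem coeff_monicOfCoeffs_of_lt (M : Fin m → R) {k : ℕ} (hk : k < m) :
    (monicOfCoeffs M).coeff k = -M ⟨k, hk⟩ := by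
  simp only [monicOfCoeffs, coeff_sub, coeff_X_pow, if_neg hk.ne, finsetSum_coeff,
    coeff_C_mul_X_pow]
  rw [sum_eq_single ⟨k, hk⟩ (fun j _ hj => if_neg fun h => hj (Fin.ext h.symm)) (by simp)]
  simp

theorem natDegree_monicOfCoeffs [Nontrivial R] (M : Fin m → R) :
    (monicOfCoeffs M).natDegree = m := by
  refine natDegree_eq_of_degree_eq_some
    ((degree_sub_eq_left_of_degree_lt ?_).trans (degree_X_pow m))
  rw [degree_X_pow]
  exact degree_sum_fin_lt M

theorem monicOfCoeffs_neg_coeff {p : R[X]} (hp : p.Monic) (hdeg : p.natDegree = m) :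
    monicOfCoeffs (fun j : Fin m => -p.coeff j) = p := by
  conv_rhs => rw [hp.as_sum, hdeg]
  simp [monicOfCoeffs, Fin.sum_univ_eq_sum_range (fun k => C (p.coeff k) * X ^ k), sub_eq_add_neg]

end monicOfCoeffs

section coeffsOfRoots

variable {K : Type*} [Field K] {m : ℕ}

noncomputable def coeffsOfRoots (r : Fin m → K) : Fin m → K :=
  fun j => -(∏ i, (X - C (r i))).coeff j

theorem monicOfCoeffs_coeffsOfRoots (r : Fin m → K) :
    monicOfCoeffs (coeffsOfRoots r) = ∏ i, (X - C (r i)) :=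
  monicOfCoeffs_neg_coeff (monic_prod_of_monic _ _ fun i _ => monic_X_sub_C (r i)) (by simp)

theorem isRoot_monicOfCoeffs_coeffsOfRoots_iff (r : Fin m → K) (x : K) :
    (monicOfCoeffs (coeffsOfRoots r)).IsRoot x ↔ x ∈ Set.range r := by
  rw [monicOfCoeffs_coeffsOfRoots, IsRoot.def, eval_prod, prod_eq_zero_iff]
  simp [sub_eq_zero, eq_comm]

theorem setOf_pow_eq_sum_coeffsOfRoots (r : Fin m → K) :
    {x : K | x ^ m = ∑ j : Fin m, coeffsOfRoots r j * x ^ (j : ℕ)} = Set.range r :=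
  Set.ext fun x => (isRoot_monicOfCoeffs_iff _ x).symm.trans
    (isRoot_monicOfCoeffs_coeffsOfRoots_iff r x)

theorem continuous_coeffsOfRoots [TopologicalSpace K] [IsTopologicalRing K] :
    Continuous (coeffsOfRoots : (Fin m → K) → Fin m → K) :=
  continuous_pi fun j => (continuous_coeff_prod_X_sub_C j).neg

theorem surjective_coeffsOfRoots [IsAlgClosed K] :
    Function.Surjective (coeffsOfRoots : (Fin m → K) → Fin m → K) := by
  intro M
  obtain ⟨r, hr⟩ := IsAlgClosed.exists_prod_X_sub_C_eq (monicOfCoeffs_monic M)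
    (natDegree_monicOfCoeffs M)
  refine ⟨r, funext fun j => ?_⟩
  rw [coeffsOfRoots, hr, coeff_monicOfCoeffs_of_lt M j.2, neg_neg]

end coeffsOfRoots

section Normed

variable {K : Type*} [NormedField K] {m : ℕ}

theorem norm_le_of_isRoot_monicOfCoeffs {M : Fin m → K} {x : K}
    (hx : (monicOfCoeffs M).IsRoot x) : ‖x‖ ≤ ‖M‖ + 1 := by
  have hbound : cauchyBound (monicOfCoeffs M) ≤ ‖M‖₊ + 1 := by
    rw [cauchyBound, (monicOfCoeffs_monic M).leadingCoeff, nnnorm_one, div_one,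
      natDegree_monicOfCoeffs]
    gcongr
    refine Finset.sup_le fun k hk => ?_
    rw [coeff_monicOfCoeffs_of_lt M (mem_range.mp hk), nnnorm_neg]
    exact nnnorm_le_pi_nnnorm M _
  exact_mod_cast (hx.norm_lt_cauchyBound (monicOfCoeffs_monic M).ne_zero).le.trans hbound

theorem isProperMap_coeffsOfRoots [ProperSpace K] :
    IsProperMap (coeffsOfRoots : (Fin m → K) → Fin m → K) := by
  rw [isProperMap_iff_isCompact_preimage]
  refine ⟨continuous_coeffsOfRoots, fun S hS => ?_⟩
  obtain ⟨R, hR0, hRS⟩ := hS.isBounded.subset_closedBall_lt 0 0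
  refine (isCompact_closedBall 0 (R + 1)).of_isClosed_subset
    (hS.isClosed.preimage continuous_coeffsOfRoots) fun r hr => ?_
  rw [mem_closedBall_zero_iff, pi_norm_le_iff_of_nonneg (by positivity)]
  intro i
  have hroot := (isRoot_monicOfCoeffs_coeffsOfRoots_iff r (r i)).mpr ⟨i, rfl⟩
  exact (norm_le_of_isRoot_monicOfCoeffs hroot).trans
    (by gcongr; simpa using hRS hr)

theorem isQuotientMap_coeffsOfRoots [ProperSpace K] [IsAlgClosed K] :
    Topology.IsQuotientMap (coeffsOfRoots : (Fin m → K) → Fin m → K) :=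
  isProperMap_coeffsOfRoots.isClosedMap.isQuotientMap continuous_coeffsOfRoots
    surjective_coeffsOfRoots

end Normed

theorem max_re_roots_continuous_general (m : ℕ) :
    Continuous fun M : Fin m → ℂ =>
      sSup (Complex.re '' {lam : ℂ | lam ^ m = ∑ j : Fin m, M j * lam ^ (j : ℕ)}) := by
  rw [isQuotientMap_coeffsOfRoots.continuous_iff]
  simp only [Function.comp_def, setOf_pow_eq_sum_coeffsOfRoots, ← Set.range_comp]
  exact Continuous.ciSup_fintype fun i => Complex.continuous_re.comp (continuous_apply i)

/-- For `m ≥ 1`, the function `F : ℂ^m → ℝ` sending `M = (a_0, …, a_{m-1})` to the maximum of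
the real parts of the roots of the monic polynomial
`λ^m − a_{m−1} λ^{m−1} − ⋯ − a_1 λ − a_0` is continuous on `ℂ^m`.
(The maximum is expressed as the supremum of the set of real parts of the roots, which is a
finite nonempty set since the polynomial is monic of degree `m ≥ 1`.) -/
theorem max_re_roots_continuous (m : ℕ) (hm : 1 ≤ m) :
    Continuous fun M : Fin m → ℂ =>
      sSup (Complex.re '' {lam : ℂ | lam ^ m = ∑ j : Fin m, M j * lam ^ (j : ℕ)}) :=
  max_re_roots_continuous_general m
end

section
/- Let m ≥ 1, X > 0, and let a_0,…,a_{m−1} : [0,X] → ℝ be continuous. Assume that for every x ∈ [0,X] every root λ of the polynomial p(x) = λ^m − a_{m−1}(x)λ^{m−1} − ⋯ − a_0(x) satisfies Re λ < 0. Then there exists χ > 0 such that Re λ < −χ for every x ∈ [0,X] and every root λ of p(x). -/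
/-!
The pairs `(x, λ)` with `x ∈ [0, X]` and `λ` a root of `p(x)` form a compact set: it is closed
by continuity of the coefficients, and bounded because the coefficients are bounded on the
compact interval and the roots of a monic polynomial are bounded in terms of its coefficients
(Cauchy). The continuous function `Re λ` attains its maximum on this set, and that maximum is
negative by hypothesis.
-/

open Finset

theorem norm_le_max_one_mul_of_pow_eq_sum {𝕜 : Type*} [NormedDivisionRing 𝕜] {m : ℕ}
    {c : Fin m → 𝕜} {C : ℝ} (hc : ∀ j, ‖c j‖ ≤ C) {z : 𝕜}
    (hz : z ^ m = ∑ j, c j * z ^ (j : ℕ)) : ‖z‖ ≤ max 1 (m * C) := by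
  by_contra! h
  have hz1 : 1 < ‖z‖ := (le_max_left _ _).trans_lt h
  have hzC : m * C < ‖z‖ := (le_max_right _ _).trans_lt h
  obtain ⟨n, rfl⟩ : ∃ n, m = n + 1 :=
    Nat.exists_eq_succ_of_ne_zero (by rintro rfl; simp at hz)
  have hle : ‖z‖ ^ (n + 1) ≤ (n + 1) * C * ‖z‖ ^ n :=
    calc ‖z‖ ^ (n + 1) = ‖∑ j : Fin (n + 1), c j * z ^ (j : ℕ)‖ := by rw [← hz, norm_pow]
      _ ≤ ∑ j : Fin (n + 1), ‖c j‖ * ‖z‖ ^ (j : ℕ) := by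
        simpa only [norm_mul, norm_pow] using
          norm_sum_le univ fun j : Fin (n + 1) ↦ c j * z ^ (j : ℕ)
      _ ≤ ∑ _j : Fin (n + 1), C * ‖z‖ ^ n := by
        refine sum_le_sum fun j _ ↦ ?_
        calc ‖c j‖ * ‖z‖ ^ (j : ℕ) ≤ ‖c j‖ * ‖z‖ ^ n :=
              mul_le_mul_of_nonneg_left (pow_le_pow_right₀ hz1.le (Nat.lt_succ_iff.mp j.2))
                (norm_nonneg _)
          _ ≤ C * ‖z‖ ^ n := mul_le_mul_of_nonneg_right (hc j) (by positivity)
      _ = (n + 1) * C * ‖z‖ ^ n := by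
        rw [sum_const, card_univ, Fintype.card_fin, nsmul_eq_mul]; push_cast; ring
  have hlt : (n + 1) * C * ‖z‖ ^ n < ‖z‖ ^ (n + 1) := by
    rw [pow_succ']
    push_cast at hzC
    exact mul_lt_mul_of_pos_right hzC (by positivity)
  exact hle.not_gt hlt

theorem ContinuousOn.isCompact_inter_preimage {α β : Type*} [TopologicalSpace α]
    [TopologicalSpace β] {f : α → β} {s : Set α} {t : Set β} (hf : ContinuousOn f s)
    (hs : IsCompact s) (ht : IsClosed t) : IsCompact (s ∩ f ⁻¹' t) := by
  obtain ⟨u, hu, hsu⟩ := continuousOn_iff_isClosed.1 hf t ht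
  rw [Set.inter_comm, hsu, Set.inter_comm]
  exact hs.inter_right hu

theorem isCompact_setOf_pow_eq_sum {α 𝕜 : Type*} [TopologicalSpace α] [NormedField 𝕜]
    [ProperSpace 𝕜] {m : ℕ} {K : Set α} (hK : IsCompact K) {c : Fin m → α → 𝕜}
    (hc : ∀ j, ContinuousOn (c j) K) :
    IsCompact {p : α × 𝕜 | p.1 ∈ K ∧ p.2 ^ m = ∑ j, c j p.1 * p.2 ^ (j : ℕ)} := by
  obtain ⟨C, hC⟩ : ∃ C, ∀ x ∈ K, ‖fun j ↦ c j x‖ ≤ C :=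
    hK.exists_bound_of_continuousOn (continuousOn_pi.2 hc)
  set T := K ×ˢ Metric.closedBall (0 : 𝕜) (max 1 (m * C))
  have hg : ContinuousOn (fun p : α × 𝕜 ↦ p.2 ^ m - ∑ j, c j p.1 * p.2 ^ (j : ℕ)) T := by
    have hcT : ∀ j, ContinuousOn (fun p : α × 𝕜 ↦ c j p.1) T := fun j ↦
      (hc j).comp continuousOn_fst fun _ hp ↦ hp.1
    exact (continuous_snd.pow m).continuousOn.sub
      (continuousOn_finsetSum _ fun j _ ↦ (hcT j).mul (continuous_snd.pow _).continuousOn)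
  convert hg.isCompact_inter_preimage (hK.prod (isCompact_closedBall _ _)) isClosed_singleton
    using 1
  ext ⟨x, z⟩
  refine ⟨fun ⟨hx, hz⟩ ↦ ⟨⟨hx, mem_closedBall_zero_iff.2 ?_⟩, sub_eq_zero.2 hz⟩,
    fun ⟨⟨hx, _⟩, hz⟩ ↦ ⟨hx, sub_eq_zero.1 hz⟩⟩
  exact norm_le_max_one_mul_of_pow_eq_sum
    (fun j ↦ (norm_le_pi_norm (fun j ↦ c j x) j).trans (hC x hx)) hz

theorem exists_pos_forall_re_lt_neg_of_forall_re_neg {α : Type*} [TopologicalSpace α] {m : ℕ}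
    {K : Set α} (hK : IsCompact K) {c : Fin m → α → ℂ} (hc : ∀ j, ContinuousOn (c j) K)
    (hre : ∀ x ∈ K, ∀ z : ℂ, z ^ m = ∑ j, c j x * z ^ (j : ℕ) → z.re < 0) :
    ∃ χ > (0 : ℝ), ∀ x ∈ K, ∀ z : ℂ, z ^ m = ∑ j, c j x * z ^ (j : ℕ) → z.re < -χ := by
  rcases Set.eq_empty_or_nonempty
      {p : α × ℂ | p.1 ∈ K ∧ p.2 ^ m = ∑ j, c j p.1 * p.2 ^ (j : ℕ)} with hS | hS
  · exact ⟨1, one_pos, fun x hx z hz ↦ (hS.subset (show (x, z) ∈ _ from ⟨hx, hz⟩)).elim⟩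
  obtain ⟨p, ⟨hpK, hp⟩, hmax⟩ := (isCompact_setOf_pow_eq_sum hK hc).exists_isMaxOn hS
    (Complex.continuous_re.comp continuous_snd).continuousOn
  have hp_re := hre p.1 hpK p.2 hp
  refine ⟨-p.2.re / 2, by linarith, fun x hx z hz ↦ ?_⟩
  have hz_le : z.re ≤ p.2.re := hmax (show (x, z) ∈ _ from ⟨hx, hz⟩)
  linarith

theorem roots_re_uniformly_negative_general (m : ℕ) (X : ℝ)
    (a : Fin m → ℝ → ℝ) (ha : ∀ j, ContinuousOn (a j) (Set.Icc 0 X))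
    (hroots : ∀ x ∈ Set.Icc (0 : ℝ) X, ∀ lam : ℂ,
      lam ^ m = ∑ j : Fin m, (a j x : ℂ) * lam ^ (j : ℕ) → lam.re < 0) :
    ∃ χ > (0 : ℝ), ∀ x ∈ Set.Icc (0 : ℝ) X, ∀ lam : ℂ,
      lam ^ m = ∑ j : Fin m, (a j x : ℂ) * lam ^ (j : ℕ) → lam.re < -χ :=
  exists_pos_forall_re_lt_neg_of_forall_re_neg isCompact_Icc
    (fun j ↦ Complex.continuous_ofReal.comp_continuousOn (ha j)) hroots

/-- Let `m ≥ 1`, `X > 0`, and let `a_0, …, a_{m−1} : [0,X] → ℝ` be continuous.  If for every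
`x ∈ [0,X]` every complex root `λ` of the polynomial
`p(x) = λ^m − a_{m−1}(x) λ^{m−1} − ⋯ − a_0(x)` satisfies `Re λ < 0`, then there exists
`χ > 0` such that `Re λ < −χ` for every `x ∈ [0,X]` and every root `λ` of `p(x)`. -/
theorem roots_re_uniformly_negative (m : ℕ) (hm : 1 ≤ m) (X : ℝ) (hX : 0 < X)
    (a : Fin m → ℝ → ℝ) (ha : ∀ j, ContinuousOn (a j) (Set.Icc 0 X))
    (hroots : ∀ x ∈ Set.Icc (0 : ℝ) X, ∀ lam : ℂ,
      lam ^ m = ∑ j : Fin m, (a j x : ℂ) * lam ^ (j : ℕ) → lam.re < 0) :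
    ∃ χ > (0 : ℝ), ∀ x ∈ Set.Icc (0 : ℝ) X, ∀ lam : ℂ,
      lam ^ m = ∑ j : Fin m, (a j x : ℂ) * lam ^ (j : ℕ) → lam.re < -χ :=
  roots_re_uniformly_negative_general m X a ha hroots
end

section
/- Let m ≥ 2. There is no continuous map Λ : ℂ^m → ℂ^m such that for every M = (a_0,…,a_{m−1}) ∈ ℂ^m the multiset of the m coordinates of Λ(M) equals the multiset of roots (counted with multiplicity) of the polynomial P(M) = λ^m − a_{m−1}λ^{m−1} − ⋯ − a_1λ − a_0. -/
open Polynomial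

lemma no_continuous_mth_root (m : ℕ) (hm : 2 ≤ m) (g : ℂ → ℂ) (hg : Continuous g)
    (h : ∀ a : ℂ, g a ^ m = a) : False := by
  have hm0 : (m : ℂ) ≠ 0 := by exact_mod_cast (by omega : m ≠ 0)
  set ω : ℂ := Complex.exp (2 * Real.pi * Complex.I / m) with hωdef
  have hωm : ω ^ m = 1 := by
    rw [hωdef, ← Complex.exp_nat_mul]
    rw [show (m : ℂ) * (2 * Real.pi * Complex.I / m) = 2 * Real.pi * Complex.I by
      field_simp]
    exact Complex.exp_two_pi_mul_I
  have hω0 : ω ≠ 0 := Complex.exp_ne_zero _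
  have hω1 : ω ≠ 1 := by
    intro h1
    rw [hωdef, Complex.exp_eq_one_iff] at h1
    obtain ⟨n, hn⟩ := h1
    have hpi : (2 * Real.pi * Complex.I : ℂ) ≠ 0 := by
      simp [Real.pi_ne_zero, Complex.I_ne_zero]
    have : (1 : ℂ) = n * m := by
      field_simp at hn
      have h2 : ((n : ℂ) * m) * (2 * Real.pi * Complex.I)
          = 1 * (2 * Real.pi * Complex.I) := by linear_combination (-(2 * (Real.pi : ℂ) * Complex.I)) * hn
      exact (mul_right_cancel₀ hpi h2).symm
    have h2 : (1 : ℤ) = n * m := by exact_mod_cast this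
    have : (m : ℤ) ∣ 1 := ⟨n, by linarith⟩
    have := Int.le_of_dvd one_pos this
    omega
  -- the auxiliary function
  set f : ℂ → ℂ := fun z => g (z ^ m) / z with hfdef
  have hc : ContinuousOn f ({0}ᶜ : Set ℂ) :=
    ContinuousOn.div ((hg.comp (continuous_pow m)).continuousOn) continuousOn_id
      (fun z hz => hz)
  have hfin : ({w : ℂ | w ^ m = 1} : Set ℂ).Finite := by
    have hp : (X ^ m - 1 : ℂ[X]) ≠ 0 := by
      intro h0
      have := congrArg (Polynomial.eval 0) h0
      simp [zero_pow (by omega : m ≠ 0)] at this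
    apply (Polynomial.finite_setOf_isRoot hp).subset
    intro w hw
    simp only [Set.mem_setOf_eq] at hw ⊢
    simp [Polynomial.IsRoot, hw]
  haveI := hfin.to_subtype
  have hpc : IsPreconnected ({0}ᶜ : Set ℂ) := by
    have := isConnected_compl_singleton_of_one_lt_rank
      (E := ℂ) (by rw [Complex.rank_real_complex]; norm_num) 0
    simpa [Set.compl_eq_univ_diff] using this.isPreconnected
  have hmaps : Set.MapsTo f ({0}ᶜ : Set ℂ) {w : ℂ | w ^ m = 1} := by
    intro z hz
    have hz0 : z ≠ 0 := hz
    simp only [Set.mem_setOf_eq, hfdef]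
    rw [div_pow, h, div_self (pow_ne_zero _ hz0)]
  have key : f 1 = f ω :=
    hpc.constant_of_mapsTo hfin.isDiscrete hc hmaps (by simp) (by simp [hω0])
  have h1 : f 1 = g 1 := by simp [hfdef]
  have h2 : f ω = g 1 / ω := by simp [hfdef, hωm]
  rw [h1, h2] at key
  have hg1 : g 1 ≠ 0 := by
    intro h0
    have := h 1
    rw [h0] at this
    simp [zero_pow (by omega : m ≠ 0)] at this
  have : ω = 1 := by
    field_simp at key
    exact key
  exact hω1 this

/-- For `m ≥ 2` there is no continuous map `Λ : ℂ^m → ℂ^m` such that for every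
`M = (a_0, …, a_{m−1}) ∈ ℂ^m` the multiset of the `m` coordinates of `Λ(M)` equals the
multiset of roots (counted with multiplicity) of
`P(M) = λ^m − a_{m−1} λ^{m−1} − ⋯ − a_1 λ − a_0`. -/
theorem no_global_continuous_root_selection (m : ℕ) (hm : 2 ≤ m) :
    ¬ ∃ L : (Fin m → ℂ) → (Fin m → ℂ), Continuous L ∧
        ∀ M : Fin m → ℂ,
          Multiset.map (L M) (Finset.univ : Finset (Fin m)).val =
            (Polynomial.X ^ m
              - ∑ j : Fin m, Polynomial.C (M j) * Polynomial.X ^ (j : ℕ)).roots := by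
  rintro ⟨L, hLc, hL⟩
  haveI : NeZero m := ⟨by omega⟩
  set M : ℂ → (Fin m → ℂ) := fun a j => if j = 0 then a else 0 with hMdef
  have hMc : Continuous M := by
    apply continuous_pi
    intro j
    by_cases hj : j = 0 <;> simp [hMdef, hj] <;> [exact continuous_id; exact continuous_const]
  set g : ℂ → ℂ := fun a => L (M a) 0 with hgdef
  have hgc : Continuous g := (continuous_apply (0 : Fin m)).comp (hLc.comp hMc)
  have hgm : ∀ a : ℂ, g a ^ m = a := by
    intro a
    have hsum : ∑ j : Fin m, Polynomial.C (M a j) * Polynomial.X ^ (j : ℕ)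
        = Polynomial.C a := by
      rw [Finset.sum_eq_single (0 : Fin m)]
      · simp [hMdef]
      · intro j _ hj
        simp [hMdef, hj]
      · simp
    have hmem : g a ∈ (Polynomial.X ^ m
        - ∑ j : Fin m, Polynomial.C (M a j) * Polynomial.X ^ (j : ℕ)).roots := by
      rw [← hL (M a)]
      exact Multiset.mem_map.mpr ⟨0, by simp, rfl⟩
    rw [hsum] at hmem
    have := Polynomial.isRoot_of_mem_roots hmem
    simp only [Polynomial.IsRoot, Polynomial.eval_sub, Polynomial.eval_pow,
      Polynomial.eval_X, Polynomial.eval_C, sub_eq_zero] at this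
    exact this
  exact no_continuous_mth_root m hm g hgc hgm
end

section
/- Let m ≥ 1 and C_a ≥ 0, C_w ≥ 0. Then there exists C̃ ≥ 0 such that for every (a_0,…,a_{m−1}) ∈ ℂ^m with |a_j| ≤ C_a for all j, every (w^0,…,w^{m−1}) ∈ ℂ^m with |w^j| ≤ C_w for all j, and every m-times differentiable function w : ℝ → ℂ satisfying w^{(m)}(ξ) = a_{m−1}w^{(m−1)}(ξ) + ⋯ + a_0 w(ξ) for all ξ ≥ 0 and w^{(j)}(0) = w^j for j = 0,…,m−1, one has |w^{(i)}(ξ)| ≤ C̃ (1 + ξ^{m−1}) e^{Λ̄ ξ} for all i ∈ {0,…,m−1} and all ξ ≥ 0, where Λ̄ = max{Re λ : λ is a root of λ^m − a_{m−1}λ^{m−1} − ⋯ − a_0}. -/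
open Polynomial Set

/-! ### Auxiliary: first-order ODE bound -/

lemma first_order_bound (lam : ℂ) (Λ : ℝ) (hlam : lam.re ≤ Λ)
    (u f : ℝ → ℂ) (hder : ∀ s : ℝ, 0 ≤ s → HasDerivAt u (lam * u s + f s) s)
    (hfc : ContinuousOn f (Ici 0))
    (B Cf : ℝ) (hB : ‖u 0‖ ≤ B) (hCf : 0 ≤ Cf) (k : ℕ)
    (hf : ∀ s : ℝ, 0 ≤ s → ‖f s‖ ≤ Cf * (1 + s) ^ k * Real.exp (Λ * s)) :
    ∀ ξ : ℝ, 0 ≤ ξ →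
      ‖u ξ‖ ≤ (B + Cf * (1 + ξ) ^ (k + 1)) * Real.exp (Λ * ξ) := by
  intro ξ hξ
  set g : ℝ → ℂ := fun s => Complex.exp (-(lam * s)) * u s with hg
  have hgder : ∀ s ∈ Set.uIcc 0 ξ, HasDerivAt g (Complex.exp (-(lam * s)) * f s) s := by
    intro s hs
    rw [Set.uIcc_of_le hξ] at hs
    have h1 : HasDerivAt (fun s : ℝ => Complex.exp (-(lam * s))) (-lam * Complex.exp (-(lam * s))) s := by
      have := ((hasDerivAt_id s).ofReal_comp.const_mul lam).neg.cexp
      simpa [mul_comm] using this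
    have h2 := hder s hs.1
    have := h1.fun_mul h2
    refine this.congr_deriv ?_
    ring
  have hint : IntervalIntegrable (fun s => Complex.exp (-(lam * s)) * f s) MeasureTheory.volume 0 ξ := by
    apply ContinuousOn.intervalIntegrable
    apply ContinuousOn.mul
    · exact (Continuous.cexp (by continuity)).continuousOn
    · apply hfc.mono
      rw [Set.uIcc_of_le hξ]
      exact fun x hx => hx.1
  have hfund := intervalIntegral.integral_eq_sub_of_hasDerivAt hgder hint
  have hbnd : ∀ s ∈ Set.uIoc (0:ℝ) ξ,
      ‖Complex.exp (-(lam * s)) * f s‖ ≤ Cf * (1 + ξ) ^ k * Real.exp ((Λ - lam.re) * ξ) := by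
    intro s hs
    rw [Set.uIoc_of_le hξ] at hs
    have hs0 : 0 ≤ s := le_of_lt hs.1
    have hsξ : s ≤ ξ := hs.2
    rw [norm_mul, Complex.norm_exp]
    have hre : (-(lam * (s:ℂ))).re = -(lam.re * s) := by simp [Complex.mul_re]
    rw [hre]
    calc Real.exp (-(lam.re * s)) * ‖f s‖
        ≤ Real.exp (-(lam.re * s)) * (Cf * (1 + s) ^ k * Real.exp (Λ * s)) := by
          exact mul_le_mul_of_nonneg_left (hf s hs0) (Real.exp_nonneg _)
      _ = Cf * (1 + s) ^ k * Real.exp ((Λ - lam.re) * s) := by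
          rw [show (Λ - lam.re) * s = -(lam.re * s) + Λ * s by ring, Real.exp_add]; ring
      _ ≤ Cf * (1 + ξ) ^ k * Real.exp ((Λ - lam.re) * ξ) := by
          apply mul_le_mul
          · apply mul_le_mul_of_nonneg_left _ hCf
            exact pow_le_pow_left₀ (by linarith) (by linarith) k
          · exact Real.exp_le_exp.2 (mul_le_mul_of_nonneg_left hsξ (by linarith))
          · exact Real.exp_nonneg _
          · positivity
  have hIbnd := intervalIntegral.norm_integral_le_of_norm_le_const hbnd
  rw [hfund] at hIbnd
  have habs : ‖g ξ‖ ≤ B + Cf * (1 + ξ) ^ k * Real.exp ((Λ - lam.re) * ξ) * ξ := by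
    have : ‖g ξ‖ ≤ ‖g 0‖ + ‖g ξ - g 0‖ := by
      have := norm_sub_norm_le (g ξ) (g 0)
      linarith
    have hg0 : ‖g 0‖ ≤ B := by simp [hg]; simpa using hB
    have : ‖g ξ‖ ≤ B + ‖g ξ - g 0‖ := by linarith
    refine this.trans ?_
    have : ‖g ξ - g 0‖ ≤ Cf * (1 + ξ) ^ k * Real.exp ((Λ - lam.re) * ξ) * |ξ - 0| := hIbnd
    rw [_root_.abs_of_nonneg (by linarith : (0:ℝ) ≤ ξ - 0)] at this
    linarith
  have huξ : ‖u ξ‖ = Real.exp (lam.re * ξ) * ‖g ξ‖ := by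
    rw [hg]
    simp only []
    rw [norm_mul, Complex.norm_exp]
    have hre : (-(lam * (ξ:ℂ))).re = -(lam.re * ξ) := by simp [Complex.mul_re]
    rw [hre, ← mul_assoc, ← Real.exp_add]
    simp
  rw [huξ]
  calc Real.exp (lam.re * ξ) * ‖g ξ‖
      ≤ Real.exp (lam.re * ξ) * (B + Cf * (1 + ξ) ^ k * Real.exp ((Λ - lam.re) * ξ) * ξ) :=
        mul_le_mul_of_nonneg_left habs (Real.exp_nonneg _)
    _ = B * Real.exp (lam.re * ξ) + Cf * (1 + ξ) ^ k * ξ * Real.exp (Λ * ξ) := by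
        rw [mul_add]
        congr 1
        · ring
        · rw [show Λ * ξ = (Λ - lam.re) * ξ + lam.re * ξ by ring, Real.exp_add]; ring
    _ ≤ (B + Cf * (1 + ξ) ^ (k + 1)) * Real.exp (Λ * ξ) := by
        have hB0 : 0 ≤ B := le_trans (norm_nonneg _) hB
        have h1 : B * Real.exp (lam.re * ξ) ≤ B * Real.exp (Λ * ξ) :=
          mul_le_mul_of_nonneg_left (Real.exp_le_exp.2 (mul_le_mul_of_nonneg_right hlam hξ)) hB0
        have h2 : Cf * (1 + ξ) ^ (k+1) * Real.exp (Λ * ξ) ≥ Cf * (1 + ξ) ^ k * ξ * Real.exp (Λ * ξ) := by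
          apply mul_le_mul_of_nonneg_right _ (Real.exp_nonneg _)
          rw [pow_succ]
          have : Cf * (1+ξ)^k * ξ ≤ Cf * (1+ξ)^k * (1+ξ) := by
            apply mul_le_mul_of_nonneg_left (by linarith) (by positivity)
          linarith [this]
        rw [add_mul]
        linarith

/-! ### Auxiliary: polynomial of a root list and iterated operators -/

noncomputable def polyOfList (L : List ℂ) : Polynomial ℂ :=
  (L.map (fun r => X - C r)).prod

noncomputable def Vrec : List ℂ → (ℝ → ℂ) → (ℝ → ℂ)
  | [], w => w
  | (r :: L), w => fun ξ => deriv (Vrec L w) ξ - r * Vrec L w ξ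

lemma polyOfList_monic (L : List ℂ) : (polyOfList L).Monic := by
  induction L with
  | nil => simpa [polyOfList] using monic_one
  | cons r L ih =>
    rw [polyOfList, List.map_cons, List.prod_cons]
    exact (monic_X_sub_C r).mul ih

lemma polyOfList_natDegree (L : List ℂ) : (polyOfList L).natDegree = L.length := by
  induction L with
  | nil => simp [polyOfList]
  | cons r L ih =>
    rw [polyOfList, List.map_cons, List.prod_cons, ← polyOfList,
      (monic_X_sub_C r).natDegree_mul (polyOfList_monic L)]
    simp [ih]
    omega

lemma polyOfList_cons_coeff (r : ℂ) (L : List ℂ) (j : ℕ) :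
    (polyOfList (r :: L)).coeff j
      = (X * polyOfList L).coeff j - r * (polyOfList L).coeff j := by
  rw [polyOfList, List.map_cons, List.prod_cons, ← polyOfList, sub_mul, coeff_sub, coeff_C_mul]

lemma polyOfList_coeff_bound (R : ℝ) (hR : 0 ≤ R) (L : List ℂ)
    (hL : ∀ r ∈ L, ‖r‖ ≤ R) (j : ℕ) :
    ‖(polyOfList L).coeff j‖ ≤ (1 + R) ^ L.length := by
  induction L generalizing j with
  | nil =>
    rcases j with _ | j
    · simp [polyOfList, Polynomial.coeff_one]
    · simp [polyOfList, Polynomial.coeff_one]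
  | cons r L ih =>
    have hr : ‖r‖ ≤ R := hL r (by simp)
    have hL' : ∀ x ∈ L, ‖x‖ ≤ R := fun x hx => hL x (by simp [hx])
    rw [polyOfList_cons_coeff]
    have h1 : ‖(X * polyOfList L).coeff j‖ ≤ (1 + R) ^ L.length := by
      rcases j with _ | j
      · rw [coeff_X_mul_zero]
        simp
        positivity
      · rw [coeff_X_mul]; exact ih hL' j
    have h2 : ‖(X * polyOfList L).coeff j - r * (polyOfList L).coeff j‖
        ≤ ‖(X * polyOfList L).coeff j‖ + ‖r * (polyOfList L).coeff j‖ := by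
      have := norm_sub_le ((X * polyOfList L).coeff j) (r * (polyOfList L).coeff j)
      simpa using this
    have h3 : ‖r * (polyOfList L).coeff j‖ ≤ R * (1 + R) ^ L.length := by
      rw [norm_mul]
      exact mul_le_mul hr (ih hL' j) (norm_nonneg _) hR
    have hlen : (r :: L).length = L.length + 1 := rfl
    rw [hlen, pow_succ]
    nlinarith [pow_nonneg (by linarith : (0:ℝ) ≤ 1 + R) L.length]

lemma Vrec_eq (L : List ℂ) (w : ℝ → ℂ)
    (hw : ∀ j, j < L.length → Differentiable ℝ (iteratedDeriv j w)) (ξ : ℝ) :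
    Vrec L w ξ = ∑ j ∈ Finset.range (L.length + 1),
      (polyOfList L).coeff j * iteratedDeriv j w ξ := by
  induction L generalizing ξ with
  | nil => simp [Vrec, polyOfList, Polynomial.coeff_one, iteratedDeriv_zero]
  | cons r L ih =>
    have hw' : ∀ j, j < L.length → Differentiable ℝ (iteratedDeriv j w) :=
      fun j hj => hw j (hj.trans (Nat.lt_succ_self _))
    have hw'' : ∀ j, j ≤ L.length → Differentiable ℝ (iteratedDeriv j w) :=
      fun j hj => hw j (Nat.lt_succ_of_le hj)
    have hVfun : Vrec L w = fun ξ => ∑ j ∈ Finset.range (L.length + 1),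
        (polyOfList L).coeff j * iteratedDeriv j w ξ := funext (ih hw')
    show deriv (Vrec L w) ξ - r * Vrec L w ξ = _
    rw [hVfun]
    have hd : deriv (fun ξ => ∑ j ∈ Finset.range (L.length + 1),
        (polyOfList L).coeff j * iteratedDeriv j w ξ) ξ
        = ∑ j ∈ Finset.range (L.length + 1),
          (polyOfList L).coeff j * iteratedDeriv (j+1) w ξ := by
      rw [deriv_fun_sum]
      · apply Finset.sum_congr rfl
        intro j hj
        rw [Finset.mem_range, Nat.lt_succ_iff] at hj
        rw [deriv_const_mul _ ((hw'' j hj) ξ), iteratedDeriv_succ]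
      · intro j hj
        rw [Finset.mem_range, Nat.lt_succ_iff] at hj
        exact ((hw'' j hj) ξ).const_mul _
    rw [hd]
    have hlen : (r :: L).length = L.length + 1 := rfl
    rw [hlen]
    set n := L.length with hn
    set q := polyOfList L with hq
    have hRHS : ∑ j ∈ Finset.range (n+1+1), (polyOfList (r :: L)).coeff j * iteratedDeriv j w ξ
        = ∑ j ∈ Finset.range (n+1+1), (X * q).coeff j * iteratedDeriv j w ξ
          - ∑ j ∈ Finset.range (n+1+1), (r * q.coeff j) * iteratedDeriv j w ξ := by
      rw [← Finset.sum_sub_distrib]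
      refine Finset.sum_congr rfl fun j _ => ?_
      rw [polyOfList_cons_coeff]
      ring
    have h1 : ∑ j ∈ Finset.range (n+1+1), (X * q).coeff j * iteratedDeriv j w ξ
        = ∑ j ∈ Finset.range (n+1), q.coeff j * iteratedDeriv (j+1) w ξ := by
      have e := Finset.sum_range_succ' (fun j => (X * q).coeff j * iteratedDeriv j w ξ) (n+1)
      simp only [coeff_X_mul, coeff_X_mul_zero, zero_mul, add_zero] at e
      exact e
    have h2 : ∑ j ∈ Finset.range (n+1+1), (r * q.coeff j) * iteratedDeriv j w ξ
        = r * ∑ j ∈ Finset.range (n+1), q.coeff j * iteratedDeriv j w ξ := by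
      rw [Finset.sum_range_succ]
      have hz : q.coeff (n+1) = 0 :=
        coeff_eq_zero_of_natDegree_lt (by rw [hq, polyOfList_natDegree]; omega)
      rw [hz, Finset.mul_sum]
      simp [mul_assoc]
    rw [hRHS, h1, h2]

/-! ### Auxiliary: factorization of the characteristic polynomial -/

lemma exists_roots_list (m : ℕ) (A : ℕ → ℂ) :
    ∃ L : List ℂ, L.length = m ∧
      polyOfList L = X ^ m - ∑ j ∈ Finset.range m, C (A j) * X ^ j ∧
      ∀ r ∈ L, r ^ m = ∑ j ∈ Finset.range m, A j * r ^ j := by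
  set S : Polynomial ℂ := ∑ j ∈ Finset.range m, C (A j) * X ^ j with hSdef
  set p : Polynomial ℂ := X ^ m - S with hpdef
  have hS : S.degree < (X ^ m : ℂ[X]).degree := by
    rw [degree_X_pow]
    apply lt_of_le_of_lt (Polynomial.degree_sum_le _ _)
    rw [Finset.sup_lt_iff (by exact_mod_cast WithBot.bot_lt_coe m)]
    intro j hj
    exact lt_of_le_of_lt (degree_C_mul_X_pow_le _ _)
      (by exact_mod_cast Finset.mem_range.mp hj)
  have hmonic : p.Monic := (monic_X_pow m).sub_of_left hS
  have hdeg : p.degree = m := by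
    rw [hpdef, degree_sub_eq_left_of_degree_lt hS, degree_X_pow]
  have hnatdeg : p.natDegree = m := natDegree_eq_of_degree_eq_some hdeg
  have hsplits : Splits p := IsAlgClosed.splits p
  have hcard : Multiset.card p.roots = m := by
    rw [← hnatdeg]
    exact (Polynomial.splits_iff_card_roots).mp hsplits
  refine ⟨p.roots.toList, ?_, ?_, ?_⟩
  · rw [Multiset.length_toList, hcard]
  · have hfact := hsplits.eq_prod_roots_of_monic hmonic
    rw [polyOfList]
    rw [show ((p.roots.toList.map (fun r => X - C r)).prod : ℂ[X])
        = ((p.roots.map (fun r => X - C r)).prod : ℂ[X]) by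
      rw [← Multiset.coe_toList p.roots, Multiset.map_coe, Multiset.prod_coe,
        Multiset.coe_toList]]
    exact hfact.symm
  · intro r hr
    rw [Multiset.mem_toList, Polynomial.mem_roots'] at hr
    have h0 := hr.2
    rw [Polynomial.IsRoot.def, hpdef, eval_sub, eval_pow, eval_X, hSdef, eval_finset_sum] at h0
    have h1 : r ^ m - ∑ j ∈ Finset.range m, A j * r ^ j = 0 := by
      convert h0 using 2
      exact (Finset.sum_congr rfl fun j _ => by rw [eval_mul, eval_C, eval_pow, eval_X]).symm
    exact sub_eq_zero.mp h1

lemma sub_sum_coeff (m : ℕ) (A : ℕ → ℂ) (k : ℕ) (hk : k < m) :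
    (X ^ m - ∑ j ∈ Finset.range m, C (A j) * X ^ j : ℂ[X]).coeff k = -(A k) := by
  rw [coeff_sub, coeff_X_pow, if_neg (by omega : ¬ k = m), finset_sum_coeff]
  simp only [coeff_C_mul, coeff_X_pow, mul_ite, mul_one, mul_zero]
  rw [Finset.sum_ite_eq (Finset.range m) k A, if_pos (Finset.mem_range.mpr hk)]
  ring

lemma finA_sum (m : ℕ) (a : Fin m → ℂ) (A : ℕ → ℂ) (hA : ∀ j : Fin m, A (j:ℕ) = a j)
    (g : ℕ → ℂ) :
    ∑ j : Fin m, a j * g (j:ℕ) = ∑ j ∈ Finset.range m, A j * g j := by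
  rw [← Fin.sum_univ_eq_sum_range (fun j => A j * g j) m]
  exact Finset.sum_congr rfl fun j _ => by rw [hA]

lemma root_abs_bound (m : ℕ) (hm : 1 ≤ m) (Ca : ℝ) (hCa : 0 ≤ Ca) (a : Fin m → ℂ)
    (ha : ∀ j, ‖a j‖ ≤ Ca) (r : ℂ)
    (hr : r ^ m = ∑ j : Fin m, a j * r ^ (j:ℕ)) :
    ‖r‖ ≤ 1 + m * Ca := by
  have hmCa : (0:ℝ) ≤ m * Ca := mul_nonneg (Nat.cast_nonneg m) hCa
  by_cases h1 : ‖r‖ ≤ 1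
  · linarith
  push_neg at h1
  have hterm : ∀ j : Fin m, ‖a j * r ^ (j:ℕ)‖
      ≤ Ca * (‖r‖) ^ (m - 1) := by
    intro j
    rw [norm_mul, norm_pow]
    apply mul_le_mul (ha j) (pow_le_pow_right₀ (le_of_lt h1) (by omega))
      (by positivity) hCa
  have habs : (‖r‖) ^ m ≤ m * (Ca * (‖r‖) ^ (m - 1)) := by
    rw [← norm_pow, hr]
    calc ‖∑ j : Fin m, a j * r ^ (j:ℕ)‖
        ≤ ∑ j : Fin m, ‖a j * r ^ (j:ℕ)‖ := by
          simpa using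
            norm_sum_le (Finset.univ : Finset (Fin m)) (fun j => a j * r ^ (j:ℕ))
      _ ≤ m * (Ca * (‖r‖) ^ (m - 1)) := by
          have := Finset.sum_le_card_nsmul (Finset.univ : Finset (Fin m))
            (fun j => ‖a j * r ^ (j:ℕ)‖)
            (Ca * (‖r‖) ^ (m - 1)) (fun j _ => hterm j)
          simpa [nsmul_eq_mul] using this
  have hpow : (‖r‖) ^ m = ‖r‖ * (‖r‖) ^ (m - 1) := by
    conv_lhs => rw [show m = (m - 1) + 1 by omega]
    rw [pow_succ]
    ring
  rw [hpow] at habs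
  have hXpos : (0:ℝ) < (‖r‖) ^ (m - 1) := by positivity
  have : ‖r‖ ≤ m * Ca := by
    have := (mul_le_mul_iff_of_pos_right hXpos).mp (by linarith [habs] :
      ‖r‖ * (‖r‖) ^ (m-1) ≤ (m * Ca) * (‖r‖) ^ (m-1))
    exact this
  linarith

lemma pow_one_add_le (n : ℕ) (x : ℝ) (hx : 0 ≤ x) :
    (1 + x) ^ n ≤ 2 ^ n * (1 + x ^ n) := by
  have h2 : (0:ℝ) ≤ 2 ^ n := by positivity
  rcases le_total x 1 with h | h
  · calc (1 + x) ^ n ≤ 2 ^ n := pow_le_pow_left₀ (by linarith) (by linarith) n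
      _ ≤ 2 ^ n * (1 + x ^ n) := by nlinarith [pow_nonneg hx n]
  · calc (1 + x) ^ n ≤ (2 * x) ^ n := pow_le_pow_left₀ (by linarith) (by linarith) n
      _ = 2 ^ n * x ^ n := mul_pow 2 x n
      _ ≤ 2 ^ n * (1 + x ^ n) := by nlinarith [pow_nonneg hx n]

set_option maxHeartbeats 1000000

/-- Let `m ≥ 1` and `C_a, C_w ≥ 0`.  There exists `C̃ ≥ 0` such that for every coefficient tuple
`(a_0, …, a_{m−1}) ∈ ℂ^m` with `|a_j| ≤ C_a`, every initial data with `|w^{(j)}(0)| ≤ C_w`,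
and every `m`-times differentiable `w : ℝ → ℂ` satisfying
`w^{(m)}(ξ) = a_{m−1} w^{(m−1)}(ξ) + ⋯ + a_0 w(ξ)` for all `ξ ≥ 0`, one has
`|w^{(i)}(ξ)| ≤ C̃ (1 + ξ^{m−1}) e^{Λ̄ ξ}` for all `i ∈ {0, …, m−1}` and `ξ ≥ 0`, where
`Λ̄` is the maximum of the real parts of the roots of `λ^m − a_{m−1} λ^{m−1} − ⋯ − a_0`. -/
theorem uniform_ode_bound (m : ℕ) (hm : 1 ≤ m) (Ca Cw : ℝ) (hCa : 0 ≤ Ca) (hCw : 0 ≤ Cw) :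
    ∃ C ≥ (0 : ℝ), ∀ a : Fin m → ℂ, (∀ j, ‖a j‖ ≤ Ca) →
      ∀ w : ℝ → ℂ,
        (∀ k < m, Differentiable ℝ (iteratedDeriv k w)) →
        (∀ j : Fin m, ‖iteratedDeriv (j : ℕ) w 0‖ ≤ Cw) →
        (∀ ξ : ℝ, 0 ≤ ξ →
          iteratedDeriv m w ξ = ∑ j : Fin m, a j * iteratedDeriv (j : ℕ) w ξ) →
        ∀ i < m, ∀ ξ : ℝ, 0 ≤ ξ →
          ‖iteratedDeriv i w ξ‖ ≤
            C * (1 + ξ ^ (m - 1)) *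
              Real.exp
                (sSup (Complex.re ''
                  {lam : ℂ | lam ^ m = ∑ j : Fin m, a j * lam ^ (j : ℕ)}) * ξ) := by
  -- uniform constants
  obtain ⟨R, hRdef⟩ : ∃ R : ℝ, R = 1 + m * Ca := ⟨_, rfl⟩
  have hmCa : (0:ℝ) ≤ m * Ca := mul_nonneg (Nat.cast_nonneg m) hCa
  have hR0 : (0:ℝ) ≤ R := by rw [hRdef]; linarith
  have hR1 : (1:ℝ) ≤ 1 + R := by linarith
  obtain ⟨B, hBdef⟩ : ∃ B : ℝ, B = (m + 1) * (1 + R) ^ m * Cw := ⟨_, rfl⟩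
  have hB0 : (0:ℝ) ≤ B := by
    rw [hBdef]
    have : (0:ℝ) ≤ (1 + R) ^ m := by positivity
    positivity
  obtain ⟨T, hTdef⟩ : ∃ T : ℝ, T = 1 + m * (1 + R) ^ m := ⟨_, rfl⟩
  have hT1 : (1:ℝ) ≤ T := by
    rw [hTdef]
    have : (0:ℝ) ≤ (m:ℝ) * (1 + R) ^ m := by positivity
    linarith
  have hT0 : (0:ℝ) ≤ T := by linarith
  refine ⟨2 ^ (m-1) * (m * B * T ^ m), by positivity, ?_⟩
  intro a ha w hdiff hw0 hode i hi ξ hξ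
  set Λ : ℝ := sSup (Complex.re ''
      {lam : ℂ | lam ^ m = ∑ j : Fin m, a j * lam ^ (j : ℕ)}) with hΛdef
  set A : ℕ → ℂ := fun t => if h : t < m then a ⟨t, h⟩ else 0 with hAdef
  have hAa : ∀ j : Fin m, A (j:ℕ) = a j := by
    intro j
    rw [hAdef]
    simp [j.isLt]
  obtain ⟨L, hLlen, hLpoly, hLroot⟩ := exists_roots_list m A
  -- each root lies in the root set
  have hrootS : ∀ r ∈ L, r ∈ {lam : ℂ | lam ^ m = ∑ j : Fin m, a j * lam ^ (j : ℕ)} := by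
    intro r hr
    have := hLroot r hr
    rw [Set.mem_setOf_eq, finA_sum m a A hAa (fun j => r ^ j)]
    exact this
  -- the root set is finite, hence its real parts are bounded above
  have hSeq : {lam : ℂ | lam ^ m = ∑ j : Fin m, a j * lam ^ (j : ℕ)}
      = {x : ℂ | (polyOfList L).IsRoot x} := by
    ext x
    simp only [Set.mem_setOf_eq, Polynomial.IsRoot.def, hLpoly, eval_sub, eval_pow, eval_X,
      eval_finset_sum]
    rw [show (∑ j ∈ Finset.range m, eval x (C (A j) * X ^ j))
        = ∑ j ∈ Finset.range m, A j * x ^ j from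
      Finset.sum_congr rfl fun j _ => by rw [eval_mul, eval_C, eval_pow, eval_X]]
    rw [finA_sum m a A hAa (fun j => x ^ j)]
    constructor
    · intro h; rw [h]; ring
    · intro h; linear_combination h
  have hSfin : {lam : ℂ | lam ^ m = ∑ j : Fin m, a j * lam ^ (j : ℕ)}.Finite := by
    rw [hSeq]
    exact Polynomial.finite_setOf_isRoot (polyOfList_monic L).ne_zero
  have hbdd : BddAbove (Complex.re ''
      {lam : ℂ | lam ^ m = ∑ j : Fin m, a j * lam ^ (j : ℕ)}) :=
    (hSfin.image Complex.re).bddAbove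
  have hreΛ : ∀ r ∈ L, r.re ≤ Λ := by
    intro r hr
    exact le_csSup hbdd ⟨r, hrootS r hr, rfl⟩
  have habsR : ∀ r ∈ L, ‖r‖ ≤ R := by
    intro r hr
    rw [hRdef]
    refine root_abs_bound m hm Ca hCa a ha r ?_
    exact hrootS r hr
  -- the iterated first-order factors
  set u : ℕ → ℝ → ℂ := fun t => Vrec (L.drop t) w with hudef
  have hdroplen : ∀ t : ℕ, (L.drop t).length = m - t := by
    intro t; rw [List.length_drop, hLlen]
  have hurep : ∀ t : ℕ, ∀ s : ℝ, u t s
      = ∑ j ∈ Finset.range ((m - t) + 1), (polyOfList (L.drop t)).coeff j * iteratedDeriv j w s := by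
    intro t s
    rw [hudef]
    have h := Vrec_eq (L.drop t) w (fun j hj => hdiff j (by
      rw [hdroplen t] at hj; omega)) s
    rw [hdroplen t] at h
    exact h
  have hudiff : ∀ t : ℕ, 1 ≤ t → Differentiable ℝ (u t) := by
    intro t ht
    have : u t = fun s => ∑ j ∈ Finset.range ((m - t) + 1),
        (polyOfList (L.drop t)).coeff j * iteratedDeriv j w s := funext (hurep t)
    rw [this]
    apply Differentiable.fun_sum
    intro j hj
    rw [Finset.mem_range] at hj
    exact (hdiff j (by omega)).const_mul _
  -- the function u 0 vanishes on [0, ∞)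
  have hu0 : ∀ s : ℝ, 0 ≤ s → u 0 s = 0 := by
    intro s hs
    have h := hurep 0 s
    simp only [Nat.sub_zero, List.drop_zero] at h
    have hcoeffm : (polyOfList L).coeff m = 1 := by
      have h1 := (polyOfList_monic L).coeff_natDegree
      rw [polyOfList_natDegree, hLlen] at h1
      exact h1
    rw [h, Finset.sum_range_succ, hcoeffm, one_mul]
    have hsc : ∀ j ∈ Finset.range m, (polyOfList L).coeff j * iteratedDeriv j w s
        = -(A j) * iteratedDeriv j w s := by
      intro j hj
      rw [Finset.mem_range] at hj
      rw [hLpoly, sub_sum_coeff m A j hj]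
    rw [Finset.sum_congr rfl hsc]
    have hodes := hode s hs
    rw [finA_sum m a A hAa (fun j => iteratedDeriv j w s)] at hodes
    rw [hodes, ← Finset.sum_add_distrib]
    apply Finset.sum_eq_zero
    intro j _
    ring
  -- the chain of first-order equations
  have hchain : ∀ t : ℕ, ∀ ht : t < m, ∀ s : ℝ,
      deriv (u (t+1)) s = L[t]'(by rw [hLlen]; omega) * u (t+1) s + u t s := by
    intro t ht s
    have h : u t s = deriv (u (t+1)) s - L[t]'(by rw [hLlen]; omega) * u (t+1) s := by
      rw [hudef]
      simp only []
      rw [List.drop_eq_getElem_cons (by rw [hLlen]; omega : t < L.length)]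
      rfl
    rw [h]; ring
  -- uniform bound on initial data of the u t
  have hinit : ∀ t : ℕ, 1 ≤ t → t ≤ m → ‖u t 0‖ ≤ B := by
    intro t ht1 htm
    rw [hurep t 0]
    calc ‖∑ j ∈ Finset.range ((m - t) + 1),
          (polyOfList (L.drop t)).coeff j * iteratedDeriv j w 0‖
        ≤ ∑ j ∈ Finset.range ((m - t) + 1),
            ‖(polyOfList (L.drop t)).coeff j * iteratedDeriv j w 0‖ := by
          simpa using norm_sum_le (Finset.range ((m-t)+1))
            (fun j => (polyOfList (L.drop t)).coeff j * iteratedDeriv j w 0)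
      _ ≤ (((m - t : ℕ) : ℝ) + 1) * ((1 + R) ^ m * Cw) := by
          have hbound : ∀ j ∈ Finset.range ((m - t) + 1),
              ‖(polyOfList (L.drop t)).coeff j * iteratedDeriv j w 0‖
                ≤ (1 + R) ^ m * Cw := by
            intro j hj
            rw [Finset.mem_range] at hj
            have hjm : j < m := by omega
            rw [norm_mul]
            apply mul_le_mul
            · have h1 := polyOfList_coeff_bound R hR0 (L.drop t)
                (fun r hr => habsR r (List.mem_of_mem_drop hr)) j
              rw [hdroplen t] at h1
              exact h1.trans (pow_le_pow_right₀ hR1 (by omega))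
            · exact hw0 ⟨j, hjm⟩
            · exact norm_nonneg _
            · positivity
          have := Finset.sum_le_card_nsmul (Finset.range ((m-t)+1))
            (fun j => ‖(polyOfList (L.drop t)).coeff j * iteratedDeriv j w 0‖)
            ((1 + R) ^ m * Cw) hbound
          simpa [nsmul_eq_mul, Finset.card_range] using this
      _ ≤ B := by
          rw [hBdef]
          have h1 : (((m - t : ℕ) : ℝ) + 1) ≤ (m + 1 : ℝ) := by
            have h3 : (m - t : ℕ) ≤ m := Nat.sub_le m t
            have h4 : ((m - t : ℕ) : ℝ) ≤ (m : ℝ) := Nat.cast_le.mpr h3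
            linarith
          have h2 : (0:ℝ) ≤ (1 + R) ^ m * Cw := by positivity
          calc (((m - t : ℕ) : ℝ) + 1) * ((1 + R) ^ m * Cw)
              ≤ (m + 1 : ℝ) * ((1 + R) ^ m * Cw) := mul_le_mul_of_nonneg_right h1 h2
            _ = (m + 1) * (1 + R) ^ m * Cw := by ring
  -- main induction: bound on u t
  have P : ∀ t : ℕ, t ≤ m → ∀ s : ℝ, 0 ≤ s →
      ‖u t s‖ ≤ (t * B) * (1 + s) ^ (t - 1) * Real.exp (Λ * s) := by
    intro t
    induction t with
    | zero =>
      intro _ s hs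
      rw [hu0 s hs]
      simp
    | succ t ih =>
      intro htm s hs
      have ht1 : t < m := by omega
      have htL : t < L.length := by rw [hLlen]; omega
      have hder : ∀ s : ℝ, 0 ≤ s →
          HasDerivAt (u (t+1)) ((L[t]'htL) * u (t+1) s + u t s) s := by
        intro s hs
        have hd := (hudiff (t+1) (by omega)).differentiableAt (x := s)
        have := hd.hasDerivAt
        rw [hchain t ht1 s] at this
        exact this
      have hfc : ContinuousOn (u t) (Ici 0) := by
        rcases Nat.eq_zero_or_pos t with h0 | hpos
        · subst h0
          exact continuousOn_const.congr (fun x hx => hu0 x hx)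
        · exact (hudiff t hpos).continuous.continuousOn
      have hP := first_order_bound (L[t]'htL) Λ (hreΛ _ (List.getElem_mem htL))
        (u (t+1)) (u t) hder hfc B (t * B)
        (hinit (t+1) (by omega) htm) (by positivity) (t - 1)
        (fun s hs => ih (by omega) s hs) s hs
      refine hP.trans ?_
      apply mul_le_mul_of_nonneg_right _ (Real.exp_nonneg _)
      rcases Nat.eq_zero_or_pos t with h0 | hpos
      · subst h0
        simp
      · have he : (t - 1) + 1 = t := by omega
        have he2 : (t + 1) - 1 = t := by omega
        rw [he, he2]
        have hpow1 : (1:ℝ) ≤ (1 + s) ^ t := one_le_pow₀ (by linarith)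
        have : B * 1 ≤ B * (1 + s) ^ t := by
          apply mul_le_mul_of_nonneg_left _ hB0
          linarith
        push_cast
        nlinarith [mul_nonneg (mul_nonneg (Nat.cast_nonneg t : (0:ℝ) ≤ t) hB0)
          (pow_nonneg (by linarith : (0:ℝ) ≤ 1 + s) t)]
  -- recover the derivatives of w
  have Q : ∀ i : ℕ, i < m → ∀ s : ℝ, 0 ≤ s →
      ‖iteratedDeriv i w s‖ ≤ (m * B * T ^ i) * (1 + s) ^ (m - 1) * Real.exp (Λ * s) := by
    intro i
    induction i using Nat.strong_induction_on with
    | _ i ih =>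
      intro him s hs
      have hmi : m - (m - i) = i := by omega
      set q := polyOfList (L.drop (m - i)) with hqdef
      have hqdeg : q.natDegree = i := by
        rw [hqdef, polyOfList_natDegree, hdroplen]
        omega
      have hrep := hurep (m - i) s
      rw [hmi, ← hqdef] at hrep
      have hqi : q.coeff i = 1 := by
        have := (polyOfList_monic (L.drop (m-i))).coeff_natDegree
        rw [← hqdef, hqdeg] at this
        exact this
      rw [Finset.sum_range_succ, hqi, one_mul] at hrep
      have hwi : iteratedDeriv i w s
          = u (m - i) s - ∑ t ∈ Finset.range i, q.coeff t * iteratedDeriv t w s := by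
        rw [hrep]; ring
      rw [hwi]
      have hu_bound : ‖u (m - i) s‖
          ≤ (m * B) * (1 + s) ^ (m - 1) * Real.exp (Λ * s) := by
        have h1 := P (m - i) (Nat.sub_le m i) s hs
        refine h1.trans ?_
        apply mul_le_mul_of_nonneg_right _ (Real.exp_nonneg _)
        apply mul_le_mul
        · apply mul_le_mul_of_nonneg_right _ hB0
          exact_mod_cast Nat.cast_le.mpr (Nat.sub_le m i)
        · exact pow_le_pow_right₀ (by linarith) (by omega)
        · positivity
        · positivity
      have hsum_bound : ‖∑ t ∈ Finset.range i, q.coeff t * iteratedDeriv t w s‖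
          ≤ i * ((1 + R) ^ m * ((m * B * T ^ (i-1)) * (1 + s) ^ (m - 1) * Real.exp (Λ * s))) := by
        calc ‖∑ t ∈ Finset.range i, q.coeff t * iteratedDeriv t w s‖
            ≤ ∑ t ∈ Finset.range i, ‖q.coeff t * iteratedDeriv t w s‖ := by
              simpa using norm_sum_le (Finset.range i)
                (fun t => q.coeff t * iteratedDeriv t w s)
          _ ≤ i * ((1 + R) ^ m * ((m * B * T ^ (i-1)) * (1 + s) ^ (m - 1) * Real.exp (Λ * s))) := by
              have hbound : ∀ t ∈ Finset.range i,
                  ‖q.coeff t * iteratedDeriv t w s‖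
                    ≤ (1 + R) ^ m * ((m * B * T ^ (i-1)) * (1 + s) ^ (m - 1) * Real.exp (Λ * s)) := by
                intro t htr
                rw [Finset.mem_range] at htr
                rw [norm_mul]
                apply mul_le_mul
                · have h1 := polyOfList_coeff_bound R hR0 (L.drop (m - i))
                    (fun r hr => habsR r (List.mem_of_mem_drop hr)) t
                  rw [hdroplen] at h1
                  exact h1.trans (pow_le_pow_right₀ hR1 (by omega))
                · refine (ih t htr (by omega) s hs).trans ?_
                  apply mul_le_mul_of_nonneg_right _ (Real.exp_nonneg _)
                  apply mul_le_mul_of_nonneg_right _ (by positivity)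
                  apply mul_le_mul_of_nonneg_left _ (by positivity)
                  exact pow_le_pow_right₀ hT1 (by omega)
                · exact norm_nonneg _
                · positivity
              have := Finset.sum_le_card_nsmul (Finset.range i)
                (fun t => ‖q.coeff t * iteratedDeriv t w s‖)
                ((1 + R) ^ m * ((m * B * T ^ (i-1)) * (1 + s) ^ (m - 1) * Real.exp (Λ * s))) hbound
              simpa [nsmul_eq_mul, Finset.card_range] using this
      calc ‖u (m - i) s - ∑ t ∈ Finset.range i, q.coeff t * iteratedDeriv t w s‖
          ≤ ‖u (m - i) s‖
            + ‖∑ t ∈ Finset.range i, q.coeff t * iteratedDeriv t w s‖ := by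
            have := norm_sub_le (u (m - i) s)
              (∑ t ∈ Finset.range i, q.coeff t * iteratedDeriv t w s)
            simpa using this
        _ ≤ (m * B) * (1 + s) ^ (m - 1) * Real.exp (Λ * s)
            + i * ((1 + R) ^ m * ((m * B * T ^ (i-1)) * (1 + s) ^ (m - 1) * Real.exp (Λ * s))) :=
            add_le_add hu_bound hsum_bound
        _ ≤ (m * B * T ^ i) * (1 + s) ^ (m - 1) * Real.exp (Λ * s) := by
            have hE : (0:ℝ) ≤ (1 + s) ^ (m - 1) * Real.exp (Λ * s) := by positivity
            have hkey : (m * B) + i * ((1 + R) ^ m * (m * B * T ^ (i-1))) ≤ m * B * T ^ i := by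
              rcases Nat.eq_zero_or_pos i with h0 | hpos
              · subst h0; simp
              · have hi1 : (i - 1) + 1 = i := by omega
                have hTp : (1:ℝ) ≤ T ^ (i-1) := one_le_pow₀ hT1
                have him' : (i:ℝ) ≤ (m:ℝ) := Nat.cast_le.mpr (by omega)
                have hRp : (0:ℝ) ≤ (1 + R) ^ m := by positivity
                have hTpow : T ^ i = T ^ (i-1) * T := by rw [← pow_succ, hi1]
                have hmB : (0:ℝ) ≤ (m:ℝ) * B := by positivity
                have e1 : (m:ℝ) * B ≤ (m:ℝ) * B * T ^ (i-1) :=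
                  le_mul_of_one_le_right hmB hTp
                have e2 : (i:ℝ) * ((1 + R) ^ m * ((m:ℝ) * B * T ^ (i-1)))
                    ≤ (m:ℝ) * ((1 + R) ^ m * ((m:ℝ) * B * T ^ (i-1))) :=
                  mul_le_mul_of_nonneg_right him'
                    (mul_nonneg hRp (mul_nonneg hmB (by linarith)))
                calc (m:ℝ) * B + (i:ℝ) * ((1 + R) ^ m * ((m:ℝ) * B * T ^ (i-1)))
                    ≤ (m:ℝ) * B * T ^ (i-1)
                      + (m:ℝ) * ((1 + R) ^ m * ((m:ℝ) * B * T ^ (i-1))) := add_le_add e1 e2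
                  _ = (m:ℝ) * B * (T ^ (i-1) * T) := by rw [hTdef]; ring
                  _ = (m:ℝ) * B * T ^ i := by rw [hTpow]
            calc (m * B) * (1 + s) ^ (m - 1) * Real.exp (Λ * s)
                + i * ((1 + R) ^ m * ((m * B * T ^ (i-1)) * (1 + s) ^ (m - 1) * Real.exp (Λ * s)))
                = ((m * B) + i * ((1 + R) ^ m * (m * B * T ^ (i-1))))
                  * ((1 + s) ^ (m - 1) * Real.exp (Λ * s)) := by ring
              _ ≤ (m * B * T ^ i) * ((1 + s) ^ (m - 1) * Real.exp (Λ * s)) :=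
                  mul_le_mul_of_nonneg_right hkey hE
              _ = (m * B * T ^ i) * (1 + s) ^ (m - 1) * Real.exp (Λ * s) := by ring
  -- conclude
  have hfinal := Q i hi ξ hξ
  refine hfinal.trans ?_
  apply mul_le_mul_of_nonneg_right _ (Real.exp_nonneg _)
  calc (m * B * T ^ i) * (1 + ξ) ^ (m - 1)
      ≤ (m * B * T ^ m) * (2 ^ (m-1) * (1 + ξ ^ (m - 1))) := by
        apply mul_le_mul
        · apply mul_le_mul_of_nonneg_left _ (by positivity)
          exact pow_le_pow_right₀ hT1 (by omega)
        · exact pow_one_add_le (m-1) ξ hξ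
        · positivity
        · positivity
    _ = 2 ^ (m-1) * (m * B * T ^ m) * (1 + ξ ^ (m - 1)) := by ring
end

section
/- Let m ≥ 1, X > 0, χ > 0, and let a_0,…,a_{m−1} : [0,X] → ℝ be continuously differentiable. Set α := Σ_{j=0}^{m−1} sup_{x∈[0,X]}|a_j'(x)| and β := α(χ^{m−1}+m!)/χ^{m+1}. Then for every ε > 0 and every ξ ∈ [0, X/ε], ∫₀^ξ e^{χζ}[1+(ξ−ζ)^{m−1}] Σ_{j=0}^{m−1} |a_j(εζ) − a_j(εξ)| dζ ≤ ε β e^{χξ}. -/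
/-!
By the mean value theorem, `Σ_j |a_j(εζ) - a_j(εξ)| ≤ α ε (ξ - ζ)` on `[0, ξ]`, so the integral is
at most `ε α ∫₀^ξ e^{χζ} ((ξ - ζ) + (ξ - ζ)^m) dζ`. Substituting `t = ξ - ζ` turns
`∫₀^ξ e^{χζ} (ξ - ζ)^k dζ` into `e^{χξ} ∫₀^ξ t^k e^{-χt} dt ≤ e^{χξ} Γ(k+1)/χ^{k+1}`, and the cases
`k = 1` and `k = m` add up to `β/α`.
-/

open MeasureTheory Set Real
open scoped Nat

lemma integral_Ioi_pow_mul_exp_neg_mul (k : ℕ) {r : ℝ} (hr : 0 < r) :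
    ∫ t in Ioi (0 : ℝ), t ^ k * exp (-(r * t)) = k ! / r ^ (k + 1) := by
  have h := integral_rpow_mul_exp_neg_mul_Ioi (a := k + 1) (by positivity) hr
  rw [add_sub_cancel_right, Real.Gamma_nat_eq_factorial, ← Nat.cast_add_one,
    Real.rpow_natCast, one_div, inv_pow] at h
  rw [div_eq_inv_mul, ← h]
  refine setIntegral_congr_fun measurableSet_Ioi fun t _ => ?_
  rw [Real.rpow_natCast]

lemma integral_pow_mul_exp_neg_mul_le (k : ℕ) {r b : ℝ} (hr : 0 < r) (hb : 0 ≤ b) :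
    ∫ t in (0 : ℝ)..b, t ^ k * exp (-(r * t)) ≤ k ! / r ^ (k + 1) := by
  -- a nonzero Bochner integral forces integrability
  have hint : IntegrableOn (fun t : ℝ => t ^ k * exp (-(r * t))) (Ioi 0) :=
    Integrable.of_integral_ne_zero <| by
      rw [integral_Ioi_pow_mul_exp_neg_mul k hr]; positivity
  rw [← integral_Ioi_pow_mul_exp_neg_mul k hr, intervalIntegral.integral_of_le hb]
  refine setIntegral_mono_set hint ?_ Ioc_subset_Ioi_self.eventuallyLE
  filter_upwards [self_mem_ae_restrict measurableSet_Ioi] with t (ht : 0 < t)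
  positivity

lemma integral_exp_mul_mul_sub_pow_le (k : ℕ) {χ ξ : ℝ} (hχ : 0 < χ) (hξ : 0 ≤ ξ) :
    ∫ ζ in (0 : ℝ)..ξ, exp (χ * ζ) * (ξ - ζ) ^ k ≤ k ! / χ ^ (k + 1) * exp (χ * ξ) := by
  have hsub := intervalIntegral.integral_comp_sub_left
    (fun t => exp (χ * (ξ - t)) * t ^ k) ξ (a := 0) (b := ξ)
  simp only [sub_sub_cancel, sub_zero, sub_self] at hsub
  calc ∫ ζ in (0 : ℝ)..ξ, exp (χ * ζ) * (ξ - ζ) ^ k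
      = ∫ t in (0 : ℝ)..ξ, exp (χ * ξ) * (t ^ k * exp (-(χ * t))) := by
        rw [hsub]
        congr 1 with t
        rw [mul_sub, sub_eq_add_neg, exp_add]
        ring
    _ = exp (χ * ξ) * ∫ t in (0 : ℝ)..ξ, t ^ k * exp (-(χ * t)) :=
        intervalIntegral.integral_const_mul _ _
    _ ≤ exp (χ * ξ) * (k ! / χ ^ (k + 1)) := by
        gcongr; exact integral_pow_mul_exp_neg_mul_le k hχ hξ
    _ = k ! / χ ^ (k + 1) * exp (χ * ξ) := mul_comm _ _

lemma integral_exp_mul_mul_one_add_pow_mul_sub_le (n : ℕ) {χ ξ : ℝ} (hχ : 0 < χ)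
    (hξ : 0 ≤ ξ) :
    ∫ ζ in (0 : ℝ)..ξ, exp (χ * ζ) * (1 + (ξ - ζ) ^ n) * (ξ - ζ)
      ≤ (χ ^ n + (n + 1)!) / χ ^ (n + 2) * exp (χ * ξ) := by
  have hsplit : ∀ ζ, exp (χ * ζ) * (1 + (ξ - ζ) ^ n) * (ξ - ζ)
      = exp (χ * ζ) * (ξ - ζ) ^ 1 + exp (χ * ζ) * (ξ - ζ) ^ (n + 1) := fun ζ => by ring
  simp only [hsplit]
  rw [intervalIntegral.integral_add (by apply Continuous.intervalIntegrable; fun_prop)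
    (by apply Continuous.intervalIntegrable; fun_prop)]
  calc _ ≤ 1 ! / χ ^ (1 + 1) * exp (χ * ξ) + (n + 1)! / χ ^ (n + 1 + 1) * exp (χ * ξ) :=
        add_le_add (integral_exp_mul_mul_sub_pow_le 1 hχ hξ)
          (integral_exp_mul_mul_sub_pow_le (n + 1) hχ hξ)
    _ = (χ ^ n + (n + 1)!) / χ ^ (n + 2) * exp (χ * ξ) := by
        field_simp
        ring

lemma abs_sub_le_iSup_abs_derivWithin_mul {f : ℝ → ℝ} {a b : ℝ} (hab : a < b)
    (hf : ContDiffOn ℝ 1 f (Icc a b)) {x y : ℝ} (hx : x ∈ Icc a b) (hy : y ∈ Icc a b) :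
    |f x - f y| ≤ (⨆ z : Icc a b, |derivWithin f (Icc a b) z|) * |x - y| := by
  have hbdd : BddAbove (range fun z : Icc a b => |derivWithin f (Icc a b) z|) := by
    simpa only [image_eq_range] using isCompact_Icc.bddAbove_image
      (hf.continuousOn_derivWithin (uniqueDiffOn_Icc hab) le_rfl).abs
  simpa only [Real.norm_eq_abs] using (convex_Icc a b).norm_image_sub_le_of_norm_derivWithin_le
    (hf.differentiableOn one_ne_zero) (fun z hz => le_ciSup hbdd ⟨z, hz⟩) hy hx

lemma sum_abs_sub_le_sum_iSup_abs_derivWithin_mul {ι : Type*} (s : Finset ι) {f : ι → ℝ → ℝ}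
    {a b : ℝ} (hab : a < b) (hf : ∀ j ∈ s, ContDiffOn ℝ 1 (f j) (Icc a b)) {x y : ℝ}
    (hx : x ∈ Icc a b) (hy : y ∈ Icc a b) :
    ∑ j ∈ s, |f j x - f j y|
      ≤ (∑ j ∈ s, ⨆ z : Icc a b, |derivWithin (f j) (Icc a b) z|) * |x - y| := by
  rw [Finset.sum_mul]
  exact Finset.sum_le_sum fun j hj => abs_sub_le_iSup_abs_derivWithin_mul hab (hf j hj) hx hy

lemma intervalIntegral.integral_mono_on_of_nonneg {f g : ℝ → ℝ} {a b : ℝ} (hab : a ≤ b)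
    (hf : ∀ x ∈ Icc a b, 0 ≤ f x) (hg : IntervalIntegrable g volume a b)
    (h : ∀ x ∈ Icc a b, f x ≤ g x) :
    ∫ x in a..b, f x ≤ ∫ x in a..b, g x := by
  by_cases hfi : IntervalIntegrable f volume a b
  · exact intervalIntegral.integral_mono_on hab hfi hg h
  · rw [intervalIntegral.integral_undef hfi]
    exact intervalIntegral.integral_nonneg hab fun x hx => (hf x hx).trans (h x hx)

lemma integral_exp_mul_mul_one_add_pow_mul_le_of_le_mul_sub (n : ℕ) {S : ℝ → ℝ} {C χ ξ : ℝ}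
    (hξ : 0 ≤ ξ) (hS₀ : ∀ ζ ∈ Icc 0 ξ, 0 ≤ S ζ) (hS : ∀ ζ ∈ Icc 0 ξ, S ζ ≤ C * (ξ - ζ)) :
    ∫ ζ in (0 : ℝ)..ξ, exp (χ * ζ) * (1 + (ξ - ζ) ^ n) * S ζ
      ≤ C * ∫ ζ in (0 : ℝ)..ξ, exp (χ * ζ) * (1 + (ξ - ζ) ^ n) * (ξ - ζ) := by
  rw [← intervalIntegral.integral_const_mul]
  refine intervalIntegral.integral_mono_on_of_nonneg hξ (fun ζ hζ => ?_)
    (by apply Continuous.intervalIntegrable; fun_prop) (fun ζ hζ => ?_)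
  all_goals have : 0 ≤ ξ - ζ := sub_nonneg.mpr hζ.2
  · have := hS₀ ζ hζ
    positivity
  · calc exp (χ * ζ) * (1 + (ξ - ζ) ^ n) * S ζ
        ≤ exp (χ * ζ) * (1 + (ξ - ζ) ^ n) * (C * (ξ - ζ)) := by gcongr; exact hS ζ hζ
      _ = C * (exp (χ * ζ) * (1 + (ξ - ζ) ^ n) * (ξ - ζ)) := by ring

/-- Let `m ≥ 1`, `X > 0`, `χ > 0`, and let `a_0, …, a_{m−1} : [0,X] → ℝ` be continuously
differentiable.  With `α := Σ_j sup_{[0,X]} |a_j'|` and `β := α (χ^{m−1} + m!)/χ^{m+1}`,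
for every `ε > 0` and every `ξ ∈ [0, X/ε]`,
`∫₀^ξ e^{χζ} [1+(ξ−ζ)^{m−1}] Σ_j |a_j(εζ) − a_j(εξ)| dζ ≤ ε β e^{χξ}`. -/
theorem coefficient_difference_integral_bound (m : ℕ) (hm : 1 ≤ m) (X χ : ℝ)
    (hX : 0 < X) (hχ : 0 < χ)
    (a : Fin m → ℝ → ℝ) (ha : ∀ j, ContDiffOn ℝ 1 (a j) (Set.Icc 0 X))
    (α β : ℝ)
    (hα : α = ∑ j : Fin m, ⨆ x : Set.Icc (0:ℝ) X, |derivWithin (a j) (Set.Icc 0 X) x|)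
    (hβ : β = α * (χ ^ (m - 1) + (Nat.factorial m : ℝ)) / χ ^ (m + 1)) :
    ∀ ε > (0:ℝ), ∀ ξ ∈ Set.Icc (0:ℝ) (X / ε),
      (∫ ζ in (0:ℝ)..ξ, Real.exp (χ * ζ) * (1 + (ξ - ζ) ^ (m - 1)) *
          ∑ j : Fin m, |a j (ε * ζ) - a j (ε * ξ)|)
        ≤ ε * β * Real.exp (χ * ξ) := by
  intro ε hε ξ ⟨hξ0, hξX⟩
  have hεξ : ε * ξ ≤ X := (le_div_iff₀' hε).mp hξX
  have hα0 : 0 ≤ α := hα ▸ Finset.sum_nonneg fun j _ => Real.iSup_nonneg fun _ => abs_nonneg _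
  have hsum : ∀ ζ ∈ Icc 0 ξ,
      ∑ j, |a j (ε * ζ) - a j (ε * ξ)| ≤ ε * α * (ξ - ζ) := fun ζ ⟨hζ0, hζξ⟩ => by
    have hεζ : ε * ζ ≤ ε * ξ := by gcongr
    have hdist : ε * α * (ξ - ζ) = α * |ε * ζ - ε * ξ| := by
      rw [abs_sub_comm, abs_of_nonneg (by linarith)]; ring
    rw [hdist, hα]
    exact sum_abs_sub_le_sum_iSup_abs_derivWithin_mul _ hX (fun j _ => ha j)
      ⟨by positivity, hεζ.trans hεξ⟩ ⟨by positivity, hεξ⟩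
  obtain ⟨n, rfl⟩ := Nat.exists_eq_add_of_le' hm
  simp only [Nat.add_sub_cancel] at hβ ⊢
  calc _ ≤ ε * α * ∫ ζ in (0 : ℝ)..ξ, exp (χ * ζ) * (1 + (ξ - ζ) ^ n) * (ξ - ζ) :=
        integral_exp_mul_mul_one_add_pow_mul_le_of_le_mul_sub n hξ0
          (fun _ _ => Finset.sum_nonneg fun _ _ => abs_nonneg _) hsum
    _ ≤ ε * α * ((χ ^ n + (n + 1)!) / χ ^ (n + 2) * exp (χ * ξ)) := by
        gcongr
        exact integral_exp_mul_mul_one_add_pow_mul_sub_le n hχ hξ0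
    _ = ε * β * exp (χ * ξ) := by rw [hβ]; ring
end

section
/- Let m ≥ 2, X > 0, χ > 0, C_Φ > 0, C̃ ≥ 0. Let a_0,…,a_{m−1} : [0,X] → ℝ be continuously differentiable, let ȳ : [0,X] → ℝ be continuously differentiable, let K_1,…,K_m, L_1,…,L_m : [0,∞)×[0,X] → ℝ satisfy |K_i(ξ,x)| ≤ C_Φ(1+ξ^{m−1})e^{−χξ} and |L_i(ξ,x)| ≤ C_Φ(1+ξ^{m−1})e^{−χξ} for all i, ξ ≥ 0, x ∈ [0,X], and let Π_0,…,Π_{m−1} : [0,∞) → ℝ satisfy |Π_j(ξ)| ≤ C̃(1+ξ^{m−1})e^{−χξ}. For ε > 0 define f(ζ;ε) := ε^{−1} Σ_{j=0}^{m−1}[a_j(εζ) − a_j(0)]Π_j(ζ) and, for a continuous z = (z¹,…,z^m) : [0,X/ε] → ℝ^m, define Â_i(ε)[z](ξ) := −∫₀^ξ K_i(ξ−ζ, εξ) ȳ'(εζ) dζ + ∫₀^ξ L_i(ξ−ζ, εξ){Σ_{j=0}^{m−1}[a_j(εζ) − a_j(εξ)]z^{j+1}(ζ) + f(ζ;ε)}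 dζ. Then there exist ε₀ > 0 and C₀ ≥ 0 such that for every ε ∈ (0,ε₀] and every continuous z : [0,X/ε] → ℝ^m with max_{1≤i≤m} sup_{ξ∈[0,X/ε]} |z^i(ξ)| ≤ C₀, one also has max_{1≤i≤m} sup_{ξ∈[0,X/ε]} |Â_i(ε)[z](ξ)| ≤ C₀. -/
open Real MeasureTheory intervalIntegral Set

/-- `s^k e^{-cs} ≤ k!/c^k` for `s ≥ 0`, `c > 0`. -/
lemma pow_mul_exp_neg_le (k : ℕ) {c s : ℝ} (hc : 0 < c) (hs : 0 ≤ s) :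
    s ^ k * Real.exp (-(c * s)) ≤ (1 / c) ^ k * (Nat.factorial k : ℝ) := by
  have h1 : (c * s) ^ k / (k.factorial) ≤ Real.exp (c * s) :=
    Real.pow_div_factorial_le_exp (x := c * s) (by positivity) k
  have hfac : (0:ℝ) < k.factorial := by exact_mod_cast Nat.factorial_pos k
  have h2 : (c * s) ^ k * Real.exp (-(c * s)) ≤ (Nat.factorial k : ℝ) := by
    rw [Real.exp_neg]
    rw [div_le_iff₀ hfac] at h1
    calc (c * s) ^ k * (Real.exp (c * s))⁻¹
        ≤ (Real.exp (c * s) * k.factorial) * (Real.exp (c * s))⁻¹ := by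
          apply mul_le_mul_of_nonneg_right h1 (by positivity)
      _ = k.factorial := by field_simp
  have : s ^ k = (1 / c) ^ k * (c * s) ^ k := by
    rw [← mul_pow, one_div, ← mul_assoc, inv_mul_cancel₀ hc.ne', one_mul]
  rw [this, mul_assoc]
  exact mul_le_mul_of_nonneg_left h2 (by positivity)

/-- Bound on interval integral of a function dominated by a decaying exponential. -/
lemma abs_integral_le_of_exp_bound {ξ c M : ℝ} (hξ : 0 ≤ ξ) (hc : 0 < c) (hM : 0 ≤ M)
    {g : ℝ → ℝ} (hg : IntervalIntegrable g volume 0 ξ)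
    (hbound : ∀ ζ ∈ Set.Icc (0:ℝ) ξ, |g ζ| ≤ M * Real.exp (-(c * (ξ - ζ)))) :
    |∫ ζ in (0:ℝ)..ξ, g ζ| ≤ M / c := by
  have hbc : Continuous fun ζ : ℝ => M * Real.exp (-(c * (ξ - ζ))) := by continuity
  have hbint : IntervalIntegrable (fun ζ : ℝ => M * Real.exp (-(c * (ξ - ζ)))) volume 0 ξ :=
    hbc.intervalIntegrable 0 ξ
  have h1 : |∫ ζ in (0:ℝ)..ξ, g ζ| ≤ ∫ ζ in (0:ℝ)..ξ, |g ζ| :=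
    intervalIntegral.abs_integral_le_integral_abs hξ
  have h2 : (∫ ζ in (0:ℝ)..ξ, |g ζ|) ≤ ∫ ζ in (0:ℝ)..ξ, M * Real.exp (-(c * (ξ - ζ))) := by
    apply intervalIntegral.integral_mono_on hξ hg.abs hbint
    intro x hx; exact hbound x hx
  -- compute the integral of the bound via a primitive
  have hF : ∀ ζ : ℝ, HasDerivAt (fun t => (M / c) * Real.exp (-(c * (ξ - t))))
      (M * Real.exp (-(c * (ξ - ζ)))) ζ := by
    intro ζ
    have hinner : HasDerivAt (fun t : ℝ => -(c * (ξ - t))) c ζ := by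
      have : HasDerivAt (fun t : ℝ => c * t - c * ξ) c ζ := by
        simpa using ((hasDerivAt_id ζ).const_mul c).sub_const (c * ξ)
      convert this using 2 with t; ring
    have := (hinner.exp).const_mul (M / c)
    refine this.congr_deriv ?_
    rw [mul_comm (Real.exp _) c, ← mul_assoc, div_mul_cancel₀ M hc.ne']
  have h3 : (∫ ζ in (0:ℝ)..ξ, M * Real.exp (-(c * (ξ - ζ))))
      = (M / c) * Real.exp (-(c * (ξ - ξ))) - (M / c) * Real.exp (-(c * (ξ - 0))) := by
    exact intervalIntegral.integral_eq_sub_of_hasDerivAt (fun t _ => hF t) hbint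
  have h4 : (M / c) * Real.exp (-(c * (ξ - ξ))) - (M / c) * Real.exp (-(c * (ξ - 0))) ≤ M / c := by
    have : (0:ℝ) ≤ (M / c) * Real.exp (-(c * (ξ - 0))) := by positivity
    simp only [sub_self, mul_zero, neg_zero, Real.exp_zero, mul_one]
    linarith
  linarith

/-- `(1+s^{m-1}) e^{-χ s} ≤ D e^{-(χ/2) s}`-type bound. -/
lemma kernel_decay_bound (k : ℕ) {c s : ℝ} (hc : 0 < c) (hs : 0 ≤ s) :
    (1 + s ^ k) * Real.exp (-(2*c) * s) ≤
      (1 + (1 / c) ^ k * (k.factorial : ℝ)) * Real.exp (-(c * s)) := by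
  have hsplit : Real.exp (-(2*c) * s) = Real.exp (-(c * s)) * Real.exp (-(c * s)) := by
    rw [← Real.exp_add]; congr 1; ring
  have h1 : s ^ k * Real.exp (-(c*s)) ≤ (1/c)^k * (k.factorial : ℝ) :=
    pow_mul_exp_neg_le _ hc hs
  have h2 : Real.exp (-(c*s)) ≤ 1 := Real.exp_le_one_iff.mpr (by nlinarith)
  have hE : 0 < Real.exp (-(c*s)) := Real.exp_pos _
  rw [hsplit, ← mul_assoc]
  apply mul_le_mul_of_nonneg_right _ hE.le
  rw [add_mul, one_mul]
  exact add_le_add h2 h1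

lemma kernel_decay_bound' (k : ℕ) {c s : ℝ} (hc : 0 < c) (hs : 0 ≤ s) :
    s * ((1 + s ^ k) * Real.exp (-(2*c) * s)) ≤
      ((1/c) * 1 + (1 / c) ^ (k+1) * ((k+1).factorial : ℝ)) * Real.exp (-(c * s)) := by
  have hsplit : Real.exp (-(2*c) * s) = Real.exp (-(c * s)) * Real.exp (-(c * s)) := by
    rw [← Real.exp_add]; congr 1; ring
  have h1 : s ^ (k+1) * Real.exp (-(c*s)) ≤ (1/c)^(k+1) * ((k+1).factorial : ℝ) :=
    pow_mul_exp_neg_le _ hc hs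
  have h0 : s ^ 1 * Real.exp (-(c*s)) ≤ (1/c)^1 * ((1).factorial : ℝ) :=
    pow_mul_exp_neg_le _ hc hs
  have hE : 0 < Real.exp (-(c*s)) := Real.exp_pos _
  rw [hsplit]
  have : s * ((1 + s ^ k) * (Real.exp (-(c*s)) * Real.exp (-(c*s))))
      = (s * Real.exp (-(c*s)) + s^(k+1) * Real.exp (-(c*s))) * Real.exp (-(c*s)) := by
    ring
  rw [this]
  apply mul_le_mul_of_nonneg_right _ hE.le
  have := add_le_add h0 h1
  simp only [pow_one, Nat.factorial_one, Nat.cast_one, mul_one] at this ⊢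
  linarith

set_option maxHeartbeats 1000000


/-- The integral operator `Â(ε)` of the boundary-layer system:
`Â_i(ε)[z](ξ) = −∫₀^ξ K_i(ξ−ζ, εξ) ȳ'(εζ) dζ
  + ∫₀^ξ L_i(ξ−ζ, εξ) {Σ_j [a_j(εζ) − a_j(εξ)] z^{j+1}(ζ) + f(ζ)} dζ`.
Here `yd` plays the role of `ȳ'` and the component `z j` of `z : Fin m → ℝ → ℝ`
corresponds to `z^{j+1}`. -/
noncomputable def Ahat (m : ℕ) (ε : ℝ) (a : Fin m → ℝ → ℝ) (yd : ℝ → ℝ)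
    (K L : Fin m → ℝ → ℝ → ℝ) (f : ℝ → ℝ) (z : Fin m → ℝ → ℝ) (i : Fin m) (ξ : ℝ) : ℝ :=
  -(∫ ζ in (0:ℝ)..ξ, K i (ξ - ζ) (ε * ξ) * yd (ε * ζ)) +
    ∫ ζ in (0:ℝ)..ξ, L i (ξ - ζ) (ε * ξ) *
      ((∑ j : Fin m, (a j (ε * ζ) - a j (ε * ξ)) * z j ζ) + f ζ)

/-- ball invariance.
Under the decay bounds on the kernels `K_i`, `L_i` and the boundary functions `Π_j`
(denoted `B j`), there exist `ε₀ > 0` and `C₀ ≥ 0` such that for every `ε ∈ (0, ε₀]` the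
operator `Â(ε)` maps the closed ball of radius `C₀` in `C_m[0, X/ε]` into itself, where
`f(ζ; ε) = ε⁻¹ Σ_j [a_j(εζ) − a_j(0)] Π_j(ζ)`. -/
theorem Ahat_maps_ball_into_ball (m : ℕ) (hm : 2 ≤ m) (X χ CΦ Ct : ℝ)
    (hX : 0 < X) (hχ : 0 < χ) (hCΦ : 0 < CΦ) (hCt : 0 ≤ Ct)
    (a : Fin m → ℝ → ℝ) (ha : ∀ j, ContDiffOn ℝ 1 (a j) (Set.Icc 0 X))
    (ybar : ℝ → ℝ) (hybar : ContDiffOn ℝ 1 ybar (Set.Icc 0 X))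
    (K L : Fin m → ℝ → ℝ → ℝ)
    (hKcont : ∀ i, Continuous fun p : ℝ × ℝ => K i p.1 p.2)
    (hLcont : ∀ i, Continuous fun p : ℝ × ℝ => L i p.1 p.2)
    (hK : ∀ i, ∀ ξ : ℝ, 0 ≤ ξ → ∀ x ∈ Set.Icc (0:ℝ) X,
      |K i ξ x| ≤ CΦ * (1 + ξ ^ (m - 1)) * Real.exp (-χ * ξ))
    (hL : ∀ i, ∀ ξ : ℝ, 0 ≤ ξ → ∀ x ∈ Set.Icc (0:ℝ) X,
      |L i ξ x| ≤ CΦ * (1 + ξ ^ (m - 1)) * Real.exp (-χ * ξ))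
    (B : Fin m → ℝ → ℝ) (hBcont : ∀ j, Continuous (B j))
    (hB : ∀ j, ∀ ξ : ℝ, 0 ≤ ξ → |B j ξ| ≤ Ct * (1 + ξ ^ (m - 1)) * Real.exp (-χ * ξ)) :
    ∃ ε₀ > (0:ℝ), ∃ C₀ ≥ (0:ℝ), ∀ ε ∈ Set.Ioc (0:ℝ) ε₀,
      ∀ z : Fin m → ℝ → ℝ,
        (∀ i, ContinuousOn (z i) (Set.Icc 0 (X / ε))) →
        (∀ i, ∀ ξ ∈ Set.Icc (0:ℝ) (X / ε), |z i ξ| ≤ C₀) →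
        ∀ i, ∀ ξ ∈ Set.Icc (0:ℝ) (X / ε),
          |Ahat m ε a (derivWithin ybar (Set.Icc 0 X)) K L
              (fun ζ => ε⁻¹ * ∑ j : Fin m, (a j (ε * ζ) - a j 0) * B j ζ) z i ξ| ≤ C₀ := by
  have hI0 : (0:ℝ) ∈ Set.Icc (0:ℝ) X := Set.left_mem_Icc.mpr hX.le
  have hUD : UniqueDiffOn ℝ (Set.Icc (0:ℝ) X) := uniqueDiffOn_Icc hX
  set yd := derivWithin ybar (Set.Icc 0 X) with hyd_def
  have hydc : ContinuousOn yd (Set.Icc 0 X) := hybar.continuousOn_derivWithin hUD le_rfl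
  obtain ⟨My, hMy⟩ := (isCompact_Icc).exists_bound_of_continuousOn hydc
  have hMy0 : 0 ≤ My := le_trans (norm_nonneg _) (hMy 0 hI0)
  -- Lipschitz constant for the a j
  have hadc : ∀ j, ContinuousOn (derivWithin (a j) (Set.Icc 0 X)) (Set.Icc 0 X) :=
    fun j => (ha j).continuousOn_derivWithin hUD le_rfl
  choose L' hL' using fun j => (isCompact_Icc).exists_bound_of_continuousOn (hadc j)
  set La : ℝ := ∑ j : Fin m, max (L' j) 0 with hLa_def
  have hLa0 : 0 ≤ La := Finset.sum_nonneg fun j _ => le_max_right _ _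
  have hLaj : ∀ j : Fin m, L' j ≤ La := fun j =>
    le_trans (le_max_left _ _) (Finset.single_le_sum (f := fun j => max (L' j) 0)
      (fun i _ => le_max_right _ _) (Finset.mem_univ j))
  have haLip : ∀ j, ∀ x ∈ Set.Icc (0:ℝ) X, ∀ y ∈ Set.Icc (0:ℝ) X,
      |a j y - a j x| ≤ La * |y - x| := by
    intro j x hx y hy
    have := Convex.norm_image_sub_le_of_norm_derivWithin_le
      ((ha j).differentiableOn one_ne_zero)
      (fun t ht => le_trans (hL' j t ht) (hLaj j)) (convex_Icc 0 X) hx hy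
    simpa [Real.norm_eq_abs] using this
  -- constants
  set c : ℝ := χ / 2 with hc_def
  have hc : 0 < c := by positivity
  have hχc : χ = 2 * c := by rw [hc_def]; ring
  set D : ℝ := 1 + (1 / c) ^ (m - 1) * ((m - 1).factorial : ℝ) with hD_def
  have hD0 : 0 ≤ D := by positivity
  set D₂ : ℝ := (1/c) * 1 + (1 / c) ^ (m - 1 + 1) * ((m - 1 + 1).factorial : ℝ) with hD2_def
  have hD20 : 0 ≤ D₂ := by positivity
  have hDb : ∀ s : ℝ, 0 ≤ s →
      (1 + s ^ (m - 1)) * Real.exp (-χ * s) ≤ D * Real.exp (-(c * s)) := by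
    intro s hs; rw [hχc]; exact kernel_decay_bound (m - 1) hc hs
  have hD2b : ∀ s : ℝ, 0 ≤ s →
      s * ((1 + s ^ (m - 1)) * Real.exp (-χ * s)) ≤ D₂ * Real.exp (-(c * s)) := by
    intro s hs; rw [hχc]; exact kernel_decay_bound' (m - 1) hc hs
  have hD2b' : ∀ s : ℝ, 0 ≤ s →
      s * ((1 + s ^ (m - 1)) * Real.exp (-χ * s)) ≤ D₂ := by
    intro s hs
    refine le_trans (hD2b s hs) ?_
    nlinarith [Real.exp_le_one_iff.mpr (show -(c*s) ≤ 0 by nlinarith), Real.exp_pos (-(c*s))]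
  set M₁ : ℝ := CΦ * D * My with hM1_def
  set Q : ℝ := CΦ * D₂ * (m * La) with hQ_def
  set R : ℝ := CΦ * D * (m * La * Ct * D₂) with hR_def
  have hM10 : 0 ≤ M₁ := by positivity
  have hQ0 : 0 ≤ Q := by positivity
  have hR0 : 0 ≤ R := by positivity
  refine ⟨c / (2 * (Q + 1)), by positivity, 2 * (M₁ + R) / c, by positivity, ?_⟩
  intro ε hε z hzc hz i ξ hξ
  obtain ⟨hε0, hεε₀⟩ := hε
  obtain ⟨hξ0, hξX⟩ := hξ
  set C₀ : ℝ := 2 * (M₁ + R) / c with hC0_def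
  have hC00 : 0 ≤ C₀ := by positivity
  have hεξX : ε * ξ ∈ Set.Icc (0:ℝ) X :=
    ⟨mul_nonneg hε0.le hξ0, by rw [mul_comm]; exact (le_div_iff₀ hε0).mp hξX⟩
  have hmem : ∀ ζ ∈ Set.Icc (0:ℝ) ξ, ε * ζ ∈ Set.Icc (0:ℝ) X := by
    intro ζ hζ
    refine ⟨mul_nonneg hε0.le hζ.1, ?_⟩
    calc ε * ζ ≤ ε * (X / ε) := by
          apply mul_le_mul_of_nonneg_left (le_trans hζ.2 hξX) hε0.le
      _ = X := by field_simp
  have hmem' : ∀ ζ ∈ Set.Icc (0:ℝ) ξ, ζ ∈ Set.Icc (0:ℝ) (X / ε) :=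
    fun ζ hζ => ⟨hζ.1, le_trans hζ.2 hξX⟩
  -- the two integrands
  set f : ℝ → ℝ := fun ζ => ε⁻¹ * ∑ j : Fin m, (a j (ε * ζ) - a j 0) * B j ζ with hf_def
  set g₁ : ℝ → ℝ := fun ζ => K i (ξ - ζ) (ε * ξ) * yd (ε * ζ) with hg1_def
  set g₂ : ℝ → ℝ := fun ζ => L i (ξ - ζ) (ε * ξ) *
      ((∑ j : Fin m, (a j (ε * ζ) - a j (ε * ξ)) * z j ζ) + f ζ) with hg2_def
  -- continuity / integrability
  have hmul : ContinuousOn (fun ζ : ℝ => ε * ζ) (Set.Icc 0 ξ) :=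
    (continuous_const.mul continuous_id).continuousOn
  have hacomp : ∀ j, ContinuousOn (fun ζ : ℝ => a j (ε * ζ)) (Set.Icc 0 ξ) :=
    fun j => (ha j).continuousOn.comp hmul hmem
  have hg1c : ContinuousOn g₁ (Set.Icc 0 ξ) := by
    apply ContinuousOn.mul
    · exact ((hKcont i).comp (((continuous_const.sub continuous_id).prodMk continuous_const) : Continuous fun ζ : ℝ =>
        ((ξ - ζ, ε * ξ) : ℝ × ℝ))).continuousOn
    · exact hydc.comp hmul hmem
  have hfc : ContinuousOn f (Set.Icc 0 ξ) := by
    apply ContinuousOn.mul continuousOn_const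
    apply continuousOn_finset_sum
    intro j _
    exact ((hacomp j).sub continuousOn_const).mul (hBcont j).continuousOn
  have hg2c : ContinuousOn g₂ (Set.Icc 0 ξ) := by
    apply ContinuousOn.mul
    · exact ((hLcont i).comp (((continuous_const.sub continuous_id).prodMk continuous_const) : Continuous fun ζ : ℝ =>
        ((ξ - ζ, ε * ξ) : ℝ × ℝ))).continuousOn
    · apply ContinuousOn.add _ hfc
      apply continuousOn_finset_sum
      intro j _
      exact ((hacomp j).sub continuousOn_const).mul ((hzc j).comp continuousOn_id hmem')
  have hg1i : IntervalIntegrable g₁ volume 0 ξ := by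
    apply ContinuousOn.intervalIntegrable; rwa [Set.uIcc_of_le hξ0]
  have hg2i : IntervalIntegrable g₂ volume 0 ξ := by
    apply ContinuousOn.intervalIntegrable; rwa [Set.uIcc_of_le hξ0]
  -- pointwise bounds
  have hg1b : ∀ ζ ∈ Set.Icc (0:ℝ) ξ, |g₁ ζ| ≤ M₁ * Real.exp (-(c * (ξ - ζ))) := by
    intro ζ hζ
    have hs : 0 ≤ ξ - ζ := by linarith [hζ.2]
    have hKb : |K i (ξ - ζ) (ε * ξ)| ≤ CΦ * (D * Real.exp (-(c * (ξ - ζ)))) := by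
      refine le_trans (hK i (ξ - ζ) hs (ε * ξ) hεξX) ?_
      rw [mul_assoc]
      exact mul_le_mul_of_nonneg_left (hDb _ hs) hCΦ.le
    have hyb : |yd (ε * ζ)| ≤ My := by
      have := hMy (ε * ζ) (hmem ζ hζ); rwa [Real.norm_eq_abs] at this
    calc |g₁ ζ| = |K i (ξ - ζ) (ε * ξ)| * |yd (ε * ζ)| := abs_mul _ _
      _ ≤ (CΦ * (D * Real.exp (-(c * (ξ - ζ))))) * My :=
          mul_le_mul hKb hyb (abs_nonneg _) (by positivity)
      _ = M₁ * Real.exp (-(c * (ξ - ζ))) := by rw [hM1_def]; ring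
  have hg2b : ∀ ζ ∈ Set.Icc (0:ℝ) ξ,
      |g₂ ζ| ≤ (ε * C₀ * Q + R) * Real.exp (-(c * (ξ - ζ))) := by
    intro ζ hζ
    have hs : 0 ≤ ξ - ζ := by linarith [hζ.2]
    have hker0 : 0 ≤ (1 + (ξ - ζ) ^ (m - 1)) * Real.exp (-χ * (ξ - ζ)) := by positivity
    have hLb : |L i (ξ - ζ) (ε * ξ)| ≤
        CΦ * ((1 + (ξ - ζ) ^ (m - 1)) * Real.exp (-χ * (ξ - ζ))) := by
      rw [← mul_assoc]; exact hL i (ξ - ζ) hs (ε * ξ) hεξX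
    have hSb : |∑ j : Fin m, (a j (ε * ζ) - a j (ε * ξ)) * z j ζ|
        ≤ m * (La * (ε * (ξ - ζ)) * C₀) := by
      refine le_trans (Finset.abs_sum_le_sum_abs _ _) ?_
      have : ∀ j : Fin m, |(a j (ε * ζ) - a j (ε * ξ)) * z j ζ|
          ≤ La * (ε * (ξ - ζ)) * C₀ := by
        intro j
        rw [abs_mul]
        apply mul_le_mul _ (hz j ζ (hmem' ζ hζ)) (abs_nonneg _)
          (mul_nonneg hLa0 (mul_nonneg hε0.le hs))
        have h := haLip j (ε * ξ) hεξX (ε * ζ) (hmem ζ hζ)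
        have heq : |ε * ζ - ε * ξ| = ε * (ξ - ζ) := by
          rw [abs_sub_comm, abs_of_nonneg
            (sub_nonneg.mpr (mul_le_mul_of_nonneg_left hζ.2 hε0.le))]; ring
        rw [heq] at h; exact h
      refine le_trans (Finset.sum_le_sum fun j _ => this j) ?_
      rw [Finset.sum_const, Finset.card_univ, Fintype.card_fin, nsmul_eq_mul]
    have hfb : |f ζ| ≤ m * (La * Ct * D₂) := by
      have hζ0 : 0 ≤ ζ := hζ.1
      rw [hf_def]
      simp only []
      rw [abs_mul, abs_of_pos (inv_pos.mpr hε0)]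
      have hterm : ∀ j : Fin m, |(a j (ε * ζ) - a j 0) * B j ζ|
          ≤ (La * (ε * ζ)) * (Ct * (1 + ζ ^ (m - 1)) * Real.exp (-χ * ζ)) := by
        intro j
        rw [abs_mul]
        apply mul_le_mul _ (hB j ζ hζ0) (abs_nonneg _)
          (mul_nonneg hLa0 (mul_nonneg hε0.le hζ0))
        have h := haLip j 0 hI0 (ε * ζ) (hmem ζ hζ)
        have heq : |ε * ζ - 0| = ε * ζ := by rw [sub_zero, abs_of_nonneg (mul_nonneg hε0.le hζ0)]
        rw [heq] at h; exact h
      have hsum : |∑ j : Fin m, (a j (ε * ζ) - a j 0) * B j ζ|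
          ≤ m * ((La * (ε * ζ)) * (Ct * (1 + ζ ^ (m - 1)) * Real.exp (-χ * ζ))) := by
        refine le_trans (Finset.abs_sum_le_sum_abs _ _) ?_
        refine le_trans (Finset.sum_le_sum fun j _ => hterm j) ?_
        rw [Finset.sum_const, Finset.card_univ, Fintype.card_fin, nsmul_eq_mul]
      calc ε⁻¹ * |∑ j : Fin m, (a j (ε * ζ) - a j 0) * B j ζ|
          ≤ ε⁻¹ * (m * ((La * (ε * ζ)) * (Ct * (1 + ζ ^ (m - 1)) * Real.exp (-χ * ζ)))) :=
            mul_le_mul_of_nonneg_left hsum (by positivity)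
        _ = m * (La * Ct) * (ζ * ((1 + ζ ^ (m - 1)) * Real.exp (-χ * ζ))) := by
            field_simp
        _ ≤ m * (La * Ct) * D₂ :=
            mul_le_mul_of_nonneg_left (hD2b' ζ hζ0) (by positivity)
        _ = m * (La * Ct * D₂) := by ring
    calc |g₂ ζ| ≤ |L i (ξ - ζ) (ε * ξ)| *
          (|∑ j : Fin m, (a j (ε * ζ) - a j (ε * ξ)) * z j ζ| + |f ζ|) := by
          rw [hg2_def]; simp only []
          rw [abs_mul]
          exact mul_le_mul_of_nonneg_left (abs_add_le _ _) (abs_nonneg _)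
      _ ≤ (CΦ * ((1 + (ξ - ζ) ^ (m - 1)) * Real.exp (-χ * (ξ - ζ)))) *
          ((m * (La * (ε * (ξ - ζ)) * C₀)) + m * (La * Ct * D₂)) :=
          mul_le_mul hLb (add_le_add hSb hfb) (add_nonneg (abs_nonneg _) (abs_nonneg _))
            (mul_nonneg hCΦ.le hker0)
      _ = (CΦ * (m * La) * (ε * C₀)) *
            ((ξ - ζ) * ((1 + (ξ - ζ) ^ (m - 1)) * Real.exp (-χ * (ξ - ζ)))) +
          (CΦ * (m * (La * Ct * D₂))) *
            ((1 + (ξ - ζ) ^ (m - 1)) * Real.exp (-χ * (ξ - ζ))) := by ring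
      _ ≤ (CΦ * (m * La) * (ε * C₀)) * (D₂ * Real.exp (-(c * (ξ - ζ)))) +
          (CΦ * (m * (La * Ct * D₂))) * (D * Real.exp (-(c * (ξ - ζ)))) := by
          apply add_le_add
          · exact mul_le_mul_of_nonneg_left (hD2b _ hs)
              (mul_nonneg (mul_nonneg hCΦ.le (mul_nonneg (Nat.cast_nonneg m) hLa0))
                (mul_nonneg hε0.le hC00))
          · exact mul_le_mul_of_nonneg_left (hDb _ hs)
              (mul_nonneg hCΦ.le (mul_nonneg (Nat.cast_nonneg m)
                (mul_nonneg (mul_nonneg hLa0 hCt) hD20)))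
      _ = (ε * C₀ * Q + R) * Real.exp (-(c * (ξ - ζ))) := by
          rw [hQ_def, hR_def]; ring
  -- integral bounds
  have hI1 : |∫ ζ in (0:ℝ)..ξ, g₁ ζ| ≤ M₁ / c :=
    abs_integral_le_of_exp_bound hξ0 hc hM10 hg1i hg1b
  have hI2 : |∫ ζ in (0:ℝ)..ξ, g₂ ζ| ≤ (ε * C₀ * Q + R) / c :=
    abs_integral_le_of_exp_bound hξ0 hc (by positivity) hg2i hg2b
  -- smallness of ε
  have hsmall : ε * C₀ * Q ≤ M₁ + R := by
    have h1 : ε * C₀ * Q ≤ (c / (2 * (Q + 1))) * C₀ * Q := by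
      apply mul_le_mul_of_nonneg_right (mul_le_mul_of_nonneg_right hεε₀ hC00) hQ0
    have h2 : (c / (2 * (Q + 1))) * C₀ * Q = (M₁ + R) * (Q / (Q + 1)) := by
      rw [hC0_def]; field_simp
    have h3 : Q / (Q + 1) ≤ 1 := by
      rw [div_le_one (by positivity)]; linarith
    calc ε * C₀ * Q ≤ (M₁ + R) * (Q / (Q + 1)) := by rw [← h2]; exact h1
      _ ≤ (M₁ + R) * 1 := mul_le_mul_of_nonneg_left h3 (by positivity)
      _ = M₁ + R := mul_one _
  -- conclusion
  have : |Ahat m ε a yd K L f z i ξ| ≤ M₁ / c + (ε * C₀ * Q + R) / c := by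
    rw [Ahat]
    refine le_trans (abs_add_le _ _) ?_
    rw [abs_neg]
    exact add_le_add hI1 hI2
  refine le_trans this ?_
  rw [hC0_def, ← add_div, div_le_div_iff₀ hc hc]
  nlinarith [hsmall]
end
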